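/- arXiv:1302.4249 — 12 statements merged into one kernel-verified Lean document; each statement's English description precedes it below -/
import Mathlib

section
/- Pouzet's combinatorial lemma (particular version): Let V be a set of v elements, and let t, k be integers with t ≤ min(k, v - k). Let U and U' be families of t-element subsets of V. If for every k-element subset K of V, the number of members of U contained in K equals the number of members of U' contained in K, then U = U'. -/
open Finset

private lemma pouzet_count {α : Type*} [DecidableEq α] (M T : Finset α) (k t : ℕ)
    (hT : T ⊆ M) (hTc : T.card = t) (htk : t ≤ k) :
    ((M.powersetCard k).filter (fun K => T ⊆ K)).card = (M.card - t).choose (k - t) := by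
  rw [← hTc, ← Finset.card_sdiff_of_subset hT, ← Finset.card_powersetCard]
  apply Finset.card_bij (fun K _ => K \ T)
  · intro K hK
    simp only [mem_filter, mem_powersetCard] at hK
    rw [mem_powersetCard]
    exact ⟨sdiff_subset_sdiff hK.1.1 le_rfl, by rw [card_sdiff_of_subset hK.2, hK.1.2, hTc]⟩
  · intro K hK K' hK' hEq
    simp only [mem_filter] at hK hK'
    rw [← sdiff_union_of_subset hK.2, ← sdiff_union_of_subset hK'.2, hEq]
  · intro S hS
    rw [mem_powersetCard] at hS
    have hd : Disjoint S T := disjoint_of_subset_left hS.1 sdiff_disjoint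
    refine ⟨S ∪ T, ?_, ?_⟩
    · simp only [mem_filter, mem_powersetCard]
      refine ⟨⟨union_subset (hS.1.trans sdiff_subset) hT, ?_⟩, subset_union_right⟩
      rw [card_union_of_disjoint hd, hS.2, hTc, Nat.sub_add_cancel htk]
    · rw [union_sdiff_right, sdiff_eq_self_of_disjoint hd]

/-- Pouzet's combinatorial lemma (particular version). -/
theorem pouzet_lemma {α : Type*} [DecidableEq α] (V : Finset α) (t k : ℕ)
    (htk : t ≤ k) (htv : t + k ≤ V.card)
    (U U' : Finset (Finset α))
    (hU : U ⊆ V.powersetCard t) (hU' : U' ⊆ V.powersetCard t)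
    (h : ∀ K ∈ V.powersetCard k,
      (U.filter (fun T => T ⊆ K)).card = (U'.filter (fun T => T ⊆ K)).card) :
    U = U' := by
  classical
  set f : Finset α → ℤ := fun T => (if T ∈ U then 1 else 0) - (if T ∈ U' then 1 else 0) with hf
  -- the sum of f over t-subsets of any K of size k vanishes
  have hz : ∀ K, K ⊆ V → K.card = k → ∑ T ∈ K.powersetCard t, f T = 0 := by
    intro K hKV hKc
    have h1 : (K.powersetCard t).filter (fun T => T ∈ U) = U.filter (fun T => T ⊆ K) := by
      ext T
      simp only [mem_filter, mem_powersetCard]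
      constructor
      · rintro ⟨⟨hTK, _⟩, hTU⟩; exact ⟨hTU, hTK⟩
      · rintro ⟨hTU, hTK⟩
        exact ⟨⟨hTK, (mem_powersetCard.1 (hU hTU)).2⟩, hTU⟩
    have h2 : (K.powersetCard t).filter (fun T => T ∈ U') = U'.filter (fun T => T ⊆ K) := by
      ext T
      simp only [mem_filter, mem_powersetCard]
      constructor
      · rintro ⟨⟨hTK, _⟩, hTU⟩; exact ⟨hTU, hTK⟩
      · rintro ⟨hTU, hTK⟩
        exact ⟨⟨hTK, (mem_powersetCard.1 (hU' hTU)).2⟩, hTU⟩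
    have := h K (mem_powersetCard.2 ⟨hKV, hKc⟩)
    simp only [hf, sum_sub_distrib, sum_boole, h1, h2, this, sub_self]
  -- the sum of f over t-subsets of any M ⊆ V of size ≥ k vanishes
  have hg0 : ∀ M, M ⊆ V → k ≤ M.card → ∑ T ∈ M.powersetCard t, f T = 0 := by
    intro M hM hkM
    have key : ∑ K ∈ M.powersetCard k, ∑ T ∈ K.powersetCard t, f T
        = ((M.card - t).choose (k - t) : ℤ) * ∑ T ∈ M.powersetCard t, f T := by
      have step1 : ∀ K ∈ M.powersetCard k,
          ∑ T ∈ K.powersetCard t, f T = ∑ T ∈ M.powersetCard t, if T ⊆ K then f T else 0 := by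
        intro K hK
        rw [sum_ite, sum_const_zero, add_zero]
        apply sum_congr _ (fun _ _ => rfl)
        ext T
        simp only [mem_filter, mem_powersetCard]
        obtain ⟨hKM, hKc⟩ := mem_powersetCard.1 hK
        constructor
        · rintro ⟨hTK, hTc⟩; exact ⟨⟨hTK.trans hKM, hTc⟩, hTK⟩
        · rintro ⟨⟨_, hTc⟩, hTK⟩; exact ⟨hTK, hTc⟩
      rw [sum_congr rfl step1, Finset.sum_comm]
      rw [mul_sum]
      apply sum_congr rfl
      intro T hT
      obtain ⟨hTM, hTc⟩ := mem_powersetCard.1 hT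
      rw [sum_ite, sum_const_zero, add_zero, sum_const, pouzet_count M T k t hTM hTc htk]
      simp [mul_comm]
    have hzz : ∑ K ∈ M.powersetCard k, ∑ T ∈ K.powersetCard t, f T = 0 := by
      apply sum_eq_zero
      intro K hK
      obtain ⟨hKM, hKc⟩ := mem_powersetCard.1 hK
      exact hz K (hKM.trans hM) hKc
    rw [hzz] at key
    have hpos : 0 < (M.card - t).choose (k - t) := Nat.choose_pos (by omega)
    have := key.symm
    rcases mul_eq_zero.1 this with hc | hs
    · exact absurd hc (by exact_mod_cast hpos.ne')
    · exact hs
  -- inclusion-exclusion recovers f T₀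
  have hf0 : ∀ T₀ ∈ V.powersetCard t, f T₀ = 0 := by
    intro T₀ hT₀
    obtain ⟨hT₀V, hT₀c⟩ := mem_powersetCard.1 hT₀
    have hA : ∀ S ∈ T₀.powerset, ∑ T ∈ (V \ S).powersetCard t, f T = 0 := by
      intro S hS
      rw [mem_powerset] at hS
      apply hg0 _ sdiff_subset
      have hSc : S.card ≤ t := hT₀c ▸ card_le_card hS
      rw [card_sdiff_of_subset (hS.trans hT₀V)]
      omega
    have key : ∑ S ∈ T₀.powerset, (-1 : ℤ) ^ S.card * ∑ T ∈ (V \ S).powersetCard t, f T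
        = f T₀ := by
      have step1 : ∀ S ∈ T₀.powerset,
          (-1 : ℤ) ^ S.card * ∑ T ∈ (V \ S).powersetCard t, f T
          = ∑ T ∈ V.powersetCard t, if Disjoint T S then (-1 : ℤ) ^ S.card * f T else 0 := by
        intro S hS
        have hfe : (V \ S).powersetCard t
            = (V.powersetCard t).filter (fun T => Disjoint T S) := by
          ext T
          simp only [mem_filter, mem_powersetCard, subset_sdiff]
          tauto
        rw [mul_sum, hfe, sum_filter]
      rw [sum_congr rfl step1, Finset.sum_comm]
      have step2 : ∀ T ∈ V.powersetCard t,
          (∑ S ∈ T₀.powerset, if Disjoint T S then (-1 : ℤ) ^ S.card * f T else 0)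
          = if T₀ ⊆ T then f T else 0 := by
        intro T hT
        rw [sum_ite, sum_const_zero, add_zero]
        have hfe : T₀.powerset.filter (fun S => Disjoint T S) = (T₀ \ T).powerset := by
          ext S
          simp only [mem_filter, mem_powerset, subset_sdiff]
          constructor
          · rintro ⟨h1, h2⟩; exact ⟨h1, h2.symm⟩
          · rintro ⟨h1, h2⟩; exact ⟨h1, h2.symm⟩
        rw [hfe, ← sum_mul, Finset.sum_powerset_neg_one_pow_card]
        by_cases hsub : T₀ ⊆ T
        · rw [if_pos (sdiff_eq_empty_iff_subset.2 hsub), if_pos hsub, one_mul]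
        · rw [if_neg (fun hh => hsub (sdiff_eq_empty_iff_subset.1 hh)), if_neg hsub, zero_mul]
      rw [sum_congr rfl step2]
      rw [sum_ite, sum_const_zero, add_zero]
      have hone : (V.powersetCard t).filter (fun T => T₀ ⊆ T) = {T₀} := by
        ext T
        simp only [mem_filter, mem_powersetCard, mem_singleton]
        constructor
        · rintro ⟨⟨_, hTc⟩, hsub⟩
          exact (Finset.eq_of_subset_of_card_le hsub (by rw [hTc, hT₀c])).symm
        · rintro rfl
          exact ⟨⟨hT₀V, hT₀c⟩, Subset.rfl⟩
      rw [hone, sum_singleton]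
    rw [← key]
    exact sum_eq_zero fun S hS => by rw [hA S hS, mul_zero]
  ext T
  by_cases hT : T ∈ V.powersetCard t
  · have := hf0 T hT
    simp only [hf] at this
    by_cases h1 : T ∈ U <;> by_cases h2 : T ∈ U' <;> simp [h1, h2] at this ⊢
  · constructor
    · intro hTU; exact absurd (hU hTU) hT
    · intro hTU; exact absurd (hU' hTU) hT
end

section
/- The inclusion matrix W_{t,k} of t-element subsets versus k-element subsets of a v-element set has full row rank over ℚ whenever t ≤ min(k, v-k); equivalently, its rank over ℚ equals C(v,t). -/
/-!
A vector `f` in the left kernel of `W_{t,k}` sums to zero over the `t`-subsets of every `k`-set,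
hence, by double counting, over the `t`-subsets of every set of size at least `k`.
Inclusion–exclusion recovers `f A` as `∑_{B ⊆ A} (-1)^|B| ∑_{T ⊆ V \ B, |T| = t} f T`, and every
inner sum vanishes because `|V \ B| ≥ v - t ≥ k`.
-/

open Finset Matrix

namespace Finset

variable {α M : Type*} [DecidableEq α] [AddCommGroup M]

theorem sum_powersetCard_sum_powersetCard (S : Finset α) {t k : ℕ} (htk : t ≤ k)
    (f : Finset α → M) :
    ∑ K ∈ S.powersetCard k, ∑ T ∈ K.powersetCard t, f T
      = (#S - t).choose (k - t) • ∑ T ∈ S.powersetCard t, f T := by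
  rw [sum_comm' (t' := S.powersetCard t) (s' := fun T => (S.powersetCard k).filter (T ⊆ ·)),
    smul_sum]
  · refine sum_congr rfl fun T hT => ?_
    obtain ⟨hTS, rfl⟩ := mem_powersetCard.1 hT
    rw [sum_const, card_filter_powersetCard_subset T S k hTS htk]
  · simp only [mem_powersetCard, mem_filter]
    rintro K T
    constructor
    · rintro ⟨⟨hKS, hK⟩, hTK, hT⟩
      exact ⟨⟨⟨hKS, hK⟩, hTK⟩, hTK.trans hKS, hT⟩
    · rintro ⟨⟨⟨hKS, hK⟩, hTK⟩, -, hT⟩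
      exact ⟨⟨hKS, hK⟩, hTK, hT⟩

theorem sum_powersetCard_eq_zero_of_le_card [IsAddTorsionFree M] {V : Finset α} {t k : ℕ}
    (htk : t ≤ k) {f : Finset α → M}
    (hf : ∀ K ∈ V.powersetCard k, ∑ T ∈ K.powersetCard t, f T = 0)
    {S : Finset α} (hSV : S ⊆ V) (hkS : k ≤ #S) :
    ∑ T ∈ S.powersetCard t, f T = 0 := by
  have hchoose : (#S - t).choose (k - t) ≠ 0 := (Nat.choose_pos (by omega)).ne'
  rw [← nsmul_eq_zero_iff_right hchoose, ← sum_powersetCard_sum_powersetCard S htk]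
  exact sum_eq_zero fun K hK => hf K (powersetCard_mono hSV hK)

theorem sum_powerset_zsmul_sum_powersetCard_sdiff (V A : Finset α) (t : ℕ) (f : Finset α → M) :
    ∑ B ∈ A.powerset, (-1 : ℤ) ^ #B • ∑ T ∈ (V \ B).powersetCard t, f T
      = ∑ T ∈ (V.powersetCard t).filter (A ⊆ ·), f T := by
  have hsdiff (B : Finset α) : ∑ T ∈ (V \ B).powersetCard t, f T
      = ∑ T ∈ V.powersetCard t, if Disjoint B T then f T else 0 := by
    rw [← sum_filter]
    congr 1
    ext T
    simp only [mem_powersetCard, mem_filter, subset_sdiff, disjoint_comm]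
    tauto
  have hdisjoint (T : Finset α) : A.powerset.filter (Disjoint · T) = (A \ T).powerset := by
    ext B
    simp only [mem_filter, mem_powerset, subset_sdiff]
  simp_rw [hsdiff, smul_sum, smul_ite, smul_zero]
  rw [sum_comm, sum_filter]
  refine sum_congr rfl fun T _ => ?_
  rw [← sum_filter, hdisjoint, ← sum_smul, sum_powerset_neg_one_pow_card, ite_smul, one_smul,
    zero_smul]
  simp only [sdiff_eq_empty_iff_subset]

theorem eq_zero_of_sum_powersetCard_eq_zero [IsAddTorsionFree M] {V : Finset α} {t k : ℕ}
    (htk : t ≤ k) (htv : t + k ≤ #V) {f : Finset α → M}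
    (hf : ∀ K ∈ V.powersetCard k, ∑ T ∈ K.powersetCard t, f T = 0)
    {A : Finset α} (hA : A ∈ V.powersetCard t) : f A = 0 := by
  obtain ⟨hAV, hAt⟩ := mem_powersetCard.1 hA
  have hsupersets : (V.powersetCard t).filter (A ⊆ ·) = {A} := by
    ext T
    simp only [mem_filter, mem_powersetCard, mem_singleton]
    constructor
    · rintro ⟨⟨-, hT⟩, hAT⟩
      exact (eq_of_subset_of_card_le hAT (by omega)).symm
    · rintro rfl
      exact ⟨⟨hAV, hAt⟩, subset_rfl⟩
  calc f A = ∑ T ∈ (V.powersetCard t).filter (A ⊆ ·), f T := by rw [hsupersets, sum_singleton]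
    _ = ∑ B ∈ A.powerset, (-1 : ℤ) ^ #B • ∑ T ∈ (V \ B).powersetCard t, f T :=
      (sum_powerset_zsmul_sum_powersetCard_sdiff V A t f).symm
    _ = 0 := sum_eq_zero fun B hB => by
      have hBA := card_le_card (mem_powerset.1 hB)
      have hVB := le_card_sdiff B V
      rw [sum_powersetCard_eq_zero_of_le_card htk hf sdiff_subset (by omega), smul_zero]

end Finset

section InclusionMatrix

variable {α : Type*} [DecidableEq α]

def inclusionMatrix (R : Type*) [Zero R] [One R] (V : Finset α) (t k : ℕ) :
    Matrix (V.powersetCard t) (V.powersetCard k) R :=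
  of fun T K => if (T : Finset α) ⊆ K then 1 else 0

theorem linearIndependent_row_inclusionMatrix (R : Type*) [Field R] [CharZero R]
    (V : Finset α) {t k : ℕ} (htk : t ≤ k) (htv : t + k ≤ #V) :
    LinearIndependent R (inclusionMatrix R V t k).row := by
  rw [Fintype.linearIndependent_iff]
  intro g hg T
  let f : Finset α → R := fun T => if h : T ∈ V.powersetCard t then g ⟨T, h⟩ else 0
  have hf : ∀ K ∈ V.powersetCard k, ∑ T ∈ K.powersetCard t, f T = 0 := by
    intro K hK
    have hsubsets : (V.powersetCard t).filter (· ⊆ K) = K.powersetCard t := by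
      ext T
      simp only [mem_filter, mem_powersetCard]
      exact ⟨fun ⟨⟨_, hT⟩, hTK⟩ => ⟨hTK, hT⟩,
        fun ⟨hTK, hT⟩ => ⟨⟨hTK.trans (mem_powersetCard.1 hK).1, hT⟩, hTK⟩⟩
    have hgK := congrFun hg ⟨K, hK⟩
    simp only [inclusionMatrix, Finset.sum_apply, Pi.smul_apply, row_apply, of_apply,
      smul_eq_mul, mul_ite, mul_one, mul_zero, Pi.zero_apply] at hgK
    rw [← hsubsets, sum_filter, ← sum_attach, ← univ_eq_attach]
    refine Eq.trans (sum_congr rfl fun T _ => ?_) hgK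
    simp only [f, dif_pos T.2]
  exact (dif_pos T.2).symm.trans (eq_zero_of_sum_powersetCard_eq_zero htk htv hf T.2)

end InclusionMatrix

/-- Gottlieb–Kantor: the inclusion matrix `W_{t,k}` has full row rank `C(v,t)` over `ℚ`
whenever `t ≤ min (k, v - k)`. -/
theorem inclusion_matrix_full_row_rank {α : Type*} [DecidableEq α] (V : Finset α)
    (t k : ℕ) (htk : t ≤ k) (htv : t + k ≤ V.card) :
    (Matrix.of (fun (T : ↥(V.powersetCard t)) (K : ↥(V.powersetCard k)) =>
      if (T : Finset α) ⊆ (K : Finset α) then (1 : ℚ) else 0)).rank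
      = (V.card).choose t := by
  change (inclusionMatrix ℚ V t k).rank = _
  rw [(linearIndependent_row_inclusionMatrix ℚ V htk htv).rank_matrix, Fintype.card_coe,
    card_powersetCard]
end

section
/- For t ≤ min(k, v-k), the kernel of the transpose of the inclusion matrix W_{t,k} over ℚ is trivial: if a vector x indexed by t-element subsets satisfies x · W_{t,k} = 0, then x = 0. -/
/-!
Write `σ A = ∑_{T ⊆ A, #T = t} x T`. The hypothesis says that `σ` vanishes on the `k`-subsets
of `V`; averaging over the `k`-subsets of a larger `A ⊆ V` shows that `σ A = 0` whenever
`k ≤ #A`. Given a `t`-set `T ⊆ V`, pick a `k`-set `R ⊆ V \ T` (possible as `t + k ≤ #V`).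
Inclusion–exclusion over `S ⊆ T` gives `x T = ∑_{S ⊆ T} (-1)^#S σ ((T ∪ R) \ S)`, and each of
these sets contains `R`, so every term vanishes.
-/

open Matrix Finset

namespace Finset

variable {α M : Type*} [DecidableEq α] [AddCommGroup M]

theorem sum_powerset_neg_one_pow_smul_sum_powersetCard_sdiff (A B : Finset α) (n : ℕ)
    (f : Finset α → M) :
    ∑ S ∈ B.powerset, (-1 : ℤ) ^ #S • ∑ T ∈ (A \ S).powersetCard n, f T =
      ∑ T ∈ A.powersetCard n with B ⊆ T, f T := by
  have hsdiff (S : Finset α) :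
      (A \ S).powersetCard n = {T ∈ A.powersetCard n | Disjoint S T} := by
    ext T
    simp only [mem_powersetCard, mem_filter, subset_sdiff]
    tauto
  have hdisj (T : Finset α) : {S ∈ B.powerset | Disjoint S T} = (B \ T).powerset := by
    ext S
    simp only [mem_filter, mem_powerset, subset_sdiff]
  calc ∑ S ∈ B.powerset, (-1 : ℤ) ^ #S • ∑ T ∈ (A \ S).powersetCard n, f T
      = ∑ T ∈ A.powersetCard n, (∑ S ∈ (B \ T).powerset, (-1 : ℤ) ^ #S) • f T := by
        simp_rw [hsdiff, smul_sum, sum_filter, ← hdisj, sum_filter, sum_smul, ite_smul,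
          zero_smul]
        exact sum_comm
    _ = ∑ T ∈ A.powersetCard n with B ⊆ T, f T := by
        simp_rw [sum_powerset_neg_one_pow_card, sdiff_eq_empty_iff_subset, ite_smul, one_smul,
          zero_smul, sum_filter]

theorem sum_powersetCard_sum_powersetCard_eq_choose_smul (A : Finset α) {t k : ℕ}
    (htk : t ≤ k) (f : Finset α → M) :
    ∑ K ∈ A.powersetCard k, ∑ T ∈ K.powersetCard t, f T =
      (#A - t).choose (k - t) • ∑ T ∈ A.powersetCard t, f T := by
  rw [sum_comm' (t' := A.powersetCard t) (s' := fun T ↦ {K ∈ A.powersetCard k | T ⊆ K}),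
    smul_sum]
  · refine sum_congr rfl fun T hT ↦ ?_
    obtain ⟨hTA, rfl⟩ := mem_powersetCard.1 hT
    rw [sum_const, card_filter_powersetCard_subset T A k hTA htk]
  · intro K T
    simp only [mem_powersetCard, mem_filter]
    constructor
    · rintro ⟨hK, hTK, rfl⟩
      exact ⟨⟨hK, hTK⟩, hTK.trans hK.1, rfl⟩
    · rintro ⟨⟨hK, hTK⟩, -, rfl⟩
      exact ⟨hK, hTK, rfl⟩

theorem sum_powersetCard_eq_zero_of_subset_of_le_card [IsAddTorsionFree M] {V A : Finset α}
    {t k : ℕ} (htk : t ≤ k) (f : Finset α → M)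
    (hf : ∀ K ∈ V.powersetCard k, ∑ T ∈ K.powersetCard t, f T = 0)
    (hAV : A ⊆ V) (hkA : k ≤ #A) :
    ∑ T ∈ A.powersetCard t, f T = 0 := by
  have hchoose : (#A - t).choose (k - t) ≠ 0 := (Nat.choose_pos (by omega)).ne'
  rw [← nsmul_eq_zero_iff_right hchoose,
    ← sum_powersetCard_sum_powersetCard_eq_choose_smul A htk]
  exact sum_eq_zero fun K hK ↦ hf K (powersetCard_mono hAV hK)

theorem eq_zero_of_forall_sum_powersetCard_eq_zero [IsAddTorsionFree M] {V : Finset α}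
    {t k : ℕ} (htk : t ≤ k) (htv : t + k ≤ #V) (f : Finset α → M)
    (hf : ∀ K ∈ V.powersetCard k, ∑ T ∈ K.powersetCard t, f T = 0) :
    ∀ T ∈ V.powersetCard t, f T = 0 := by
  intro T hT
  obtain ⟨hTV, rfl⟩ := mem_powersetCard.1 hT
  obtain ⟨R, hR, hRk⟩ := exists_subset_card_eq (s := V \ T) (n := k)
    (by rw [card_sdiff_of_subset hTV]; omega)
  have hRT : Disjoint R T := disjoint_of_subset_left hR sdiff_disjoint
  have hsingleton : {T' ∈ (T ∪ R).powersetCard #T | T ⊆ T'} = {T} := by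
    ext T'
    simp only [mem_filter, mem_powersetCard, mem_singleton]
    constructor
    · rintro ⟨⟨-, hcard⟩, hTT'⟩
      exact (eq_of_subset_of_card_le hTT' hcard.le).symm
    · rintro rfl
      exact ⟨⟨subset_union_left, rfl⟩, subset_rfl⟩
  rw [← sum_singleton f T, ← hsingleton,
    ← sum_powerset_neg_one_pow_smul_sum_powersetCard_sdiff]
  refine sum_eq_zero fun S hS ↦ ?_
  have hRsub : R ⊆ (T ∪ R) \ S :=
    subset_sdiff.2 ⟨subset_union_right, disjoint_of_subset_right (mem_powerset.1 hS) hRT⟩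
  rw [sum_powersetCard_eq_zero_of_subset_of_le_card htk f hf
    (sdiff_subset.trans (union_subset hTV (hR.trans sdiff_subset)))
    (hRk ▸ card_le_card hRsub), smul_zero]

end Finset

/-- For `t ≤ min (k, v - k)`, the kernel of the transpose of the inclusion matrix
`W_{t,k}` over `ℚ` is trivial: `x · W_{t,k} = 0` implies `x = 0`. -/
theorem inclusion_matrix_vecMul_eq_zero {α : Type*} [DecidableEq α] (V : Finset α)
    (t k : ℕ) (htk : t ≤ k) (htv : t + k ≤ V.card)
    (x : ↥(V.powersetCard t) → ℚ)
    (hx : Matrix.vecMul x (Matrix.of (fun (T : ↥(V.powersetCard t)) (K : ↥(V.powersetCard k)) =>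
      if (T : Finset α) ⊆ (K : Finset α) then (1 : ℚ) else 0)) = 0) :
    x = 0 := by
  set f : Finset α → ℚ := fun T ↦ if hT : T ∈ V.powersetCard t then x ⟨T, hT⟩ else 0
  have hfx (T : ↥(V.powersetCard t)) : f T = x T := dif_pos T.2
  have hf : ∀ K ∈ V.powersetCard k, ∑ T ∈ K.powersetCard t, f T = 0 := by
    intro K hK
    have hKV := (mem_powersetCard.1 hK).1
    have hfilter : K.powersetCard t = {T ∈ V.powersetCard t | T ⊆ K} := by
      ext T
      simp only [mem_powersetCard, mem_filter]
      exact ⟨fun ⟨hTK, hT⟩ ↦ ⟨⟨hTK.trans hKV, hT⟩, hTK⟩, fun ⟨⟨_, hT⟩, hTK⟩ ↦ ⟨hTK, hT⟩⟩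
    have hcol := congrFun hx ⟨K, hK⟩
    rw [hfilter, sum_filter, ← sum_coe_sort]
    simp_rw [hfx]
    simpa [vecMul, dotProduct] using hcol
  funext T
  rw [← hfx]
  exact eq_zero_of_forall_sum_powersetCard_eq_zero htk htv f hf T T.2
end

section
/- Let p be prime, and let t, k be positive integers with base-p digits t_i and k_i. If k_j = t_j for all j < t(p) (where t(p) is the index of the leading base-p digit of t) and k_{t(p)} ≥ t_{t(p)}, then for every i with 0 ≤ i ≤ t, p does not divide the binomial coefficient C(k-i, t-i). -/
lemma digits_getD_eq (p : ℕ) (hp : 1 < p) : ∀ n j : ℕ, (Nat.digits p n).getD j 0 = n / p ^ j % p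
  | n, j => by
    rcases Nat.eq_zero_or_pos n with rfl | hn
    · simp
    rw [Nat.digits_def' hp hn]
    cases j with
    | zero => simp [Nat.mod_one]
    | succ j =>
      have : n / p < n := Nat.div_lt_self hn hp
      simp only [List.getD_cons_succ]
      rw [digits_getD_eq p hp (n / p) j, pow_succ, Nat.div_div_eq_div_mul, mul_comm (p^j) p,
        ← Nat.div_div_eq_div_mul]
decreasing_by exact this

lemma mod_pow_succ' (p s n : ℕ) : n % p ^ (s + 1) = n % p ^ s + p ^ s * (n / p ^ s % p) := by
  rw [pow_succ, Nat.mod_mul]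

/-- If the base-`p` digits of `k` agree with those of `t` below the leading digit of `t`,
and the digit of `k` at the leading position of `t` is at least that of `t`, then
`p` divides none of the binomial coefficients `C(k-i, t-i)` for `0 ≤ i ≤ t`. -/
theorem not_dvd_choose_sub_of_digits (p t k : ℕ) (hp : p.Prime)
    (ht : 0 < t) (hk : 0 < k) (htk : t ≤ k)
    (hlow : ∀ j < Nat.log p t, (Nat.digits p k).getD j 0 = (Nat.digits p t).getD j 0)
    (hlead : (Nat.digits p t).getD (Nat.log p t) 0 ≤ (Nat.digits p k).getD (Nat.log p t) 0) :
    ∀ i ≤ t, ¬ p ∣ (k - i).choose (t - i) := by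
  have hp1 : 1 < p := hp.one_lt
  set L := Nat.log p t with hL
  -- translate digit hypotheses
  have hlow' : ∀ j < L, k / p ^ j % p = t / p ^ j % p := by
    intro j hj
    have := hlow j hj
    rwa [digits_getD_eq p hp1, digits_getD_eq p hp1] at this
  have hlead' : t / p ^ L % p ≤ k / p ^ L % p := by
    have := hlead
    rwa [digits_getD_eq p hp1, digits_getD_eq p hp1] at this
  -- mods agree up to p^L
  have hmod : ∀ s ≤ L, k % p ^ s = t % p ^ s := by
    intro s hs
    induction s with
    | zero => simp [Nat.mod_one]
    | succ s ih =>
      rw [mod_pow_succ', mod_pow_succ', ih (le_of_lt (Nat.lt_of_succ_le hs)),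
        hlow' s (Nat.lt_of_succ_le hs)]
  have htlt : t < p ^ (L + 1) := Nat.lt_pow_succ_log_self hp1 t
  -- t ≤ k % p^(L+1)
  have htle : t ≤ k % p ^ (L + 1) := by
    have h1 : k % p ^ (L + 1) = t % p ^ L + p ^ L * (k / p ^ L % p) := by
      rw [mod_pow_succ', hmod L le_rfl]
    have h2 : t % p ^ (L + 1) = t % p ^ L + p ^ L * (t / p ^ L % p) := mod_pow_succ' p L t
    have h3 : t % p ^ (L + 1) = t := Nat.mod_eq_of_lt htlt
    have := Nat.mul_le_mul_left (p ^ L) hlead'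
    omega
  -- key divisibility and the mod of d = k - t at p^(L+1)
  have hdvd : p ^ L ∣ (k - t) := by
    have := Nat.sub_mod_eq_zero_of_mod_eq (hmod L le_rfl)
    exact Nat.dvd_of_mod_eq_zero this
  have hde : (k - t) % p ^ (L + 1) = k % p ^ (L + 1) - t := by
    have hq := Nat.div_add_mod k (p ^ (L + 1))
    have hlt : k % p ^ (L + 1) - t < p ^ (L + 1) :=
      lt_of_le_of_lt (Nat.sub_le _ _) (Nat.mod_lt _ (pow_pos hp.pos _))
    have : k - t = p ^ (L + 1) * (k / p ^ (L + 1)) + (k % p ^ (L + 1) - t) := by omega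
    rw [this, Nat.mul_add_mod, Nat.mod_eq_of_lt hlt]
  have hkey : t + (k - t) % p ^ (L + 1) < p ^ (L + 1) := by
    rw [hde]
    have := Nat.mod_lt k (show 0 < p ^ (L + 1) from pow_pos hp.pos _)
    omega
  -- now the main statement
  intro i hi
  have hin : t - i ≤ k - i := by omega
  have hd : k - i - (t - i) = k - t := by omega
  rw [← emultiplicity_eq_zero, hp.emultiplicity_choose hin
    (Nat.lt_succ_self (Nat.log p (k - i))), hd]
  norm_cast
  rw [Finset.card_eq_zero, Finset.filter_eq_empty_iff]
  intro s hs
  rw [not_le]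
  rcases le_or_gt s L with hsL | hLs
  · -- low positions: (k-t) % p^s = 0
    have h0 : (k - t) % p ^ s = 0 :=
      Nat.mod_eq_zero_of_dvd (dvd_trans (pow_dvd_pow p hsL) hdvd)
    rw [h0, add_zero]
    exact Nat.mod_lt _ (pow_pos hp.pos s)
  · -- high positions
    have hLs' : L + 1 ≤ s := hLs
    have hps : p ^ (L + 1) ≤ p ^ s := Nat.pow_le_pow_right hp.pos hLs'
    have hm : (t - i) % p ^ s = t - i :=
      Nat.mod_eq_of_lt (lt_of_le_of_lt (Nat.sub_le t i) (lt_of_lt_of_le htlt hps))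
    obtain ⟨c, hc⟩ : p ^ (L + 1) ∣ p ^ s := pow_dvd_pow p hLs'
    set x := (k - t) % p ^ s with hxdef
    have hxe : x % p ^ (L + 1) = (k - t) % p ^ (L + 1) :=
      Nat.mod_mod_of_dvd _ (pow_dvd_pow p hLs')
    have hx : x = p ^ (L + 1) * (x / p ^ (L + 1)) + (k - t) % p ^ (L + 1) := by
      rw [← hxe]; exact (Nat.div_add_mod x (p ^ (L + 1))).symm
    set q := x / p ^ (L + 1) with hqdef
    have hxlt : x < p ^ s := Nat.mod_lt _ (pow_pos hp.pos s)
    have hqc : q < c := by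
      have h1 : p ^ (L + 1) * q ≤ x := by
        rw [hqdef, mul_comm]; exact Nat.div_mul_le_self x _
      exact Nat.lt_of_mul_lt_mul_left (lt_of_le_of_lt h1 (hc ▸ hxlt))
    have h2 : p ^ (L + 1) * (q + 1) ≤ p ^ (L + 1) * c := Nat.mul_le_mul_left _ hqc
    have h3 : p ^ (L + 1) * (q + 1) = p ^ (L + 1) * q + p ^ (L + 1) := by ring
    have h4 : t - i ≤ t := Nat.sub_le t i
    rw [hm]
    have h5 : (t - i) + (k - t) % p ^ (L + 1) < p ^ (L + 1) := by omega
    calc t - i + x = p ^ (L + 1) * q + ((t - i) + (k - t) % p ^ (L + 1)) := by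
          rw [hx]; ring
      _ < p ^ (L + 1) * q + p ^ (L + 1) := Nat.add_lt_add_left h5 _
      _ ≤ p ^ s := by rw [← h3, hc]; exact h2
end

section
/- Let p be prime and t = t_n·p^n with 1 ≤ t_n ≤ p-1, and let k be a positive integer all of whose base-p digits in positions 0 through n are zero (i.e., p^{n+1} divides k), with t ≤ k. Then p divides C(k,t), but for every i with 1 ≤ i ≤ t, p does not divide C(k-i, t-i). -/
/-!
By Kummer's theorem, `p ∣ C(m, r)` exactly when adding `r` and `m - r` in base `p` carries, i.e.
when `m % p ^ j < r % p ^ j` for some `j`. For `C(k, t)` this happens at `j = n + 1`, where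
`k % p ^ (n + 1) = 0 < t`. For `C(k - i, t - i)` it never happens: for `j ≤ n` the numbers
`k - i` and `t - i` agree modulo `p ^ j`, and for `j > n` the residue of `k - i` is at least
`p ^ (n + 1) - i ≥ t - i`.
-/

theorem Nat.le_mod_add_mod_iff_add_mod_lt (a b : ℕ) {q : ℕ} (hq : 0 < q) :
    q ≤ a % q + b % q ↔ (a + b) % q < a % q := by
  have hcarry := Nat.add_mod_add_ite a b q
  have := Nat.mod_lt b hq
  split_ifs at hcarry <;> omega

theorem Nat.Prime.dvd_choose_iff_exists_mod_pow_lt {p m r : ℕ} (hp : p.Prime) (hrm : r ≤ m) :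
    p ∣ m.choose r ↔ ∃ j, m % p ^ j < r % p ^ j := by
  have := Fact.mk hp
  rw [dvd_iff_padicValNat_ne_zero (Nat.choose_ne_zero hrm),
    padicValNat_choose hrm (Nat.lt_succ_self _), Finset.card_ne_zero, Finset.filter_nonempty_iff]
  have hcarry (j : ℕ) : p ^ j ≤ r % p ^ j + (m - r) % p ^ j ↔ m % p ^ j < r % p ^ j := by
    rw [Nat.le_mod_add_mod_iff_add_mod_lt _ _ (pow_pos hp.pos j), Nat.add_sub_cancel' hrm]
  simp only [hcarry, Finset.mem_Ico]
  refine ⟨fun ⟨j, _, hj⟩ => ⟨j, hj⟩, fun ⟨j, hj⟩ => ⟨j, ⟨?_, ?_⟩, hj⟩⟩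
  · rcases j with _ | j
    · simp only [pow_zero, Nat.mod_one, lt_self_iff_false] at hj
    · omega
  · by_contra! hlog
    have hm : m < p ^ j := Nat.lt_pow_of_log_lt hp.one_lt hlog
    rw [Nat.mod_eq_of_lt hm, Nat.mod_eq_of_lt (hrm.trans_lt hm)] at hj
    omega

theorem Nat.sub_mod_eq_sub_of_dvd {q k i : ℕ} (hqk : q ∣ k) (hk : k ≠ 0) (hi : 0 < i)
    (hiq : i ≤ q) : (k - i) % q = q - i := by
  have hle : q ≤ k := Nat.le_of_dvd (Nat.pos_of_ne_zero hk) hqk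
  have hcong : q - i ≡ k - i [MOD q] := by
    refine (Nat.modEq_iff_dvd' (by omega)).2 ?_
    rw [show k - i - (q - i) = k - q by omega]
    exact Nat.dvd_sub hqk dvd_rfl
  rw [← hcong, Nat.mod_eq_of_lt (by omega)]

theorem Nat.sub_mod_pow_le_sub_mod_pow {p n t k i : ℕ} (htn : p ^ n ∣ t) (ht : t < p ^ (n + 1))
    (hk : p ^ (n + 1) ∣ k) (htk : t ≤ k) (hi : 0 < i) (hit : i ≤ t) (j : ℕ) :
    (t - i) % p ^ j ≤ (k - i) % p ^ j := by
  rcases le_or_gt j n with hjn | hjn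
  · have hcong : t - i ≡ k - i [MOD p ^ j] := by
      refine (Nat.modEq_iff_dvd' (by omega)).2 ?_
      rw [show k - i - (t - i) = k - t by omega]
      exact Nat.dvd_sub ((pow_dvd_pow p (by omega)).trans hk) ((pow_dvd_pow p hjn).trans htn)
    exact hcong.le
  · calc (t - i) % p ^ j ≤ t - i := Nat.mod_le _ _
      _ ≤ p ^ (n + 1) - i := by omega
      _ = (k - i) % p ^ (n + 1) := (Nat.sub_mod_eq_sub_of_dvd hk (by omega) hi (by omega)).symm
      _ = (k - i) % p ^ j % p ^ (n + 1) := (Nat.mod_mod_of_dvd _ (pow_dvd_pow p hjn)).symm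
      _ ≤ (k - i) % p ^ j := Nat.mod_le _ _

theorem dvd_choose_single_digit_general (p n tn t k : ℕ) (hp : p.Prime)
    (htn₀ : 0 < tn) (htnp : tn < p) (ht : t = tn * p ^ n)
    (hdvd : p ^ (n + 1) ∣ k) (htk : t ≤ k) :
    p ∣ k.choose t ∧ ∀ i, 1 ≤ i → i ≤ t → ¬ p ∣ (k - i).choose (t - i) := by
  have ht₀ : 0 < t := ht ▸ Nat.mul_pos htn₀ (pow_pos hp.pos n)
  have htq : t < p ^ (n + 1) := by
    rw [ht, pow_succ, mul_comm]
    exact Nat.mul_lt_mul_of_pos_left htnp (pow_pos hp.pos n)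
  refine ⟨(hp.dvd_choose_iff_exists_mod_pow_lt htk).2 ⟨n + 1, ?_⟩, fun i hi hit => ?_⟩
  · rwa [Nat.mod_eq_zero_of_dvd hdvd, Nat.mod_eq_of_lt htq]
  rw [hp.dvd_choose_iff_exists_mod_pow_lt (by omega)]
  simp only [not_exists, not_lt]
  exact Nat.sub_mod_pow_le_sub_mod_pow (ht ▸ dvd_mul_left _ _) htq hdvd htk hi hit

/-- If `t = t_n p^n` with `0 < t_n < p` and `p^(n+1) ∣ k` with `0 < t ≤ k`, then
`p ∣ C(k,t)` but `p ∤ C(k-i, t-i)` for all `1 ≤ i ≤ t`. -/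
theorem dvd_choose_single_digit (p n tn t k : ℕ) (hp : p.Prime)
    (htn₀ : 0 < tn) (htnp : tn < p) (ht : t = tn * p ^ n)
    (hk : 0 < k) (hdvd : p ^ (n + 1) ∣ k) (htk : t ≤ k) :
    p ∣ k.choose t ∧ ∀ i, 1 ≤ i → i ≤ t → ¬ p ∣ (k - i).choose (t - i) :=
  dvd_choose_single_digit_general p n tn t k hp htn₀ htnp ht hdvd htk
end

section
/- Let p be prime, t = t_{t(p)} p^{t(p)} (a single nonzero base-p digit), and k divisible by p^{t(p)+1}, with t ≤ min(k, v-k). Then over ℤ/pℤ the kernel of the transpose of the inclusion matrix W_{t,k} is one-dimensional, spanned by the all-ones vector (1,1,...,1). -/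
open Matrix

section Auxiliary

open Nat

private lemma lucas_dvd' {p n k : ℕ} (hp : p.Prime) :
    p ∣ n.choose k ↔ p ∣ (n % p).choose (k % p) * (n / p).choose (k / p) := by
  haveI : Fact p.Prime := ⟨hp⟩
  rw [← Nat.modEq_zero_iff_dvd, ← Nat.modEq_zero_iff_dvd]
  have h := @Choose.choose_modEq_choose_mod_mul_choose_div_nat n k p _
  exact ⟨fun h2 => h.symm.trans h2, fun h2 => h.trans h2⟩

private lemma not_dvd_choose_of_lt' {p a b : ℕ} (hp : p.Prime) (hb : b ≤ a) (ha : a < p) :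
    ¬ p ∣ a.choose b := by
  intro h
  have h1 := Nat.choose_mul_factorial_mul_factorial hb
  have hdvd : p ∣ a.factorial := by
    rw [← h1]; exact Dvd.dvd.mul_right (Dvd.dvd.mul_right h _) _
  exact absurd ((Nat.Prime.dvd_factorial hp).mp hdvd) (by omega)

private lemma lemC {p d : ℕ} (hp : p.Prime) (hd : 0 < d) (hdp : d < p) :
    ∀ e k, p ^ (e+1) ∣ k → d * p ^ e ≤ k → p ∣ k.choose (d * p ^ e) := by
  intro e
  induction e with
  | zero =>
    intro k hdvd hle
    rw [pow_one] at hdvd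
    obtain ⟨c, rfl⟩ := hdvd
    rw [lucas_dvd' hp]
    simp [Nat.mul_mod_right, Nat.mod_eq_of_lt hdp, Nat.choose_eq_zero_of_lt hd]
  | succ e ih =>
    intro k hdvd hle
    have hpk : p ∣ k := dvd_trans (dvd_pow_self p (Nat.succ_ne_zero _)) hdvd
    obtain ⟨c, rfl⟩ := hpk
    rw [lucas_dvd' hp]
    have h1 : (p * c) % p = 0 := Nat.mul_mod_right _ _
    have h2 : (d * p ^ (e+1)) % p = 0 := by
      rw [pow_succ, ← mul_assoc, Nat.mul_mod_left]
    have h3 : (p * c) / p = c := Nat.mul_div_cancel_left _ hp.pos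
    have h4 : (d * p ^ (e+1)) / p = d * p ^ e := by
      rw [pow_succ, ← mul_assoc, Nat.mul_div_cancel _ hp.pos]
    rw [h1, h2, h3, h4, Nat.choose_zero_right, one_mul]
    refine ih c ?_ ?_
    · have h5 : p * p ^ (e+1) ∣ p * c := by
        rw [← _root_.pow_succ']; exact hdvd
      exact (mul_dvd_mul_iff_left hp.pos.ne').mp h5
    · have h6 : d * p ^ e * p ≤ c * p := by
        rw [mul_comm c p]
        calc d * p ^ e * p = d * p ^ (e+1) := by rw [pow_succ, mul_assoc]
        _ ≤ p * c := hle
      exact Nat.le_of_mul_le_mul_right h6 hp.pos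

private lemma lemB {p d : ℕ} (hp : p.Prime) (hd : 0 < d) (hdp : d < p) :
    ∀ e k j, p ^ (e+1) ∣ k → d * p ^ e ≤ k → 1 ≤ j → j ≤ d * p ^ e →
      ¬ p ∣ (k - j).choose (d * p ^ e - j) := by
  intro e
  induction e with
  | zero =>
    intro k j hdvd hle hj1 hj2
    rw [pow_zero, mul_one] at *
    rw [pow_one] at hdvd
    obtain ⟨c, rfl⟩ := hdvd
    have hjd : j ≤ d := hj2
    have hjp : j < p := lt_of_le_of_lt hjd hdp
    obtain ⟨m, rfl⟩ : ∃ m, c = m + 1 := by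
      rcases c with _ | m
      · exfalso; omega
      · exact ⟨m, rfl⟩
    have hkj : p * (m + 1) - j = (p - j) + p * m := by
      have h1 : p * (m + 1) = p * m + p := by ring
      rw [h1, Nat.add_sub_assoc (le_of_lt hjp), Nat.add_comm]
    rw [lucas_dvd' hp, hkj]
    have hm1 : ((p - j) + p * m) % p = p - j := by
      rw [Nat.add_mul_mod_self_left, Nat.mod_eq_of_lt (by omega)]
    have hm2 : ((p - j) + p * m) / p = m := by
      rw [Nat.add_mul_div_left _ _ hp.pos, Nat.div_eq_of_lt (by omega), Nat.zero_add]
    have hm3 : (d - j) % p = d - j := Nat.mod_eq_of_lt (by omega)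
    have hm4 : (d - j) / p = 0 := Nat.div_eq_of_lt (by omega)
    rw [hm1, hm2, hm3, hm4, Nat.choose_zero_right, mul_one]
    exact not_dvd_choose_of_lt' hp (by omega) (by omega)
  | succ e ih =>
    intro k j hdvd hle hj1 hj2
    have hpk : p ∣ k := dvd_trans (dvd_pow_self p (Nat.succ_ne_zero _)) hdvd
    obtain ⟨c, rfl⟩ := hpk
    have hdvd' : p ^ (e+1) ∣ c := by
      have h5 : p * p ^ (e+1) ∣ p * c := by rw [← _root_.pow_succ']; exact hdvd
      exact (mul_dvd_mul_iff_left hp.pos.ne').mp h5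
    have hdc : d * p ^ e ≤ c := by
      have h6 : d * p ^ e * p ≤ c * p := by
        rw [mul_comm c p]
        calc d * p ^ e * p = d * p ^ (e+1) := by rw [pow_succ, mul_assoc]
        _ ≤ p * c := hle
      exact Nat.le_of_mul_le_mul_right h6 hp.pos
    have hj2' : j ≤ (d * p ^ e) * p := by
      calc j ≤ d * p ^ (e+1) := hj2
      _ = (d * p ^ e) * p := by rw [pow_succ, mul_assoc]
    set q := j / p with hq
    set r := j % p with hr
    have hjqr : p * q + r = j := Nat.div_add_mod j p
    have hrp : r < p := Nat.mod_lt _ hp.pos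
    by_cases hr0 : r = 0
    · -- j = p * q
      have hj : j = p * q := by omega
      have hq1 : 1 ≤ q := by
        rcases Nat.eq_zero_or_pos q with h | h
        · exfalso; rw [h, mul_zero] at hj; omega
        · exact h
      have hq2 : q ≤ d * p ^ e := by
        have h10 : q * p ≤ (d * p ^ e) * p := by
          rw [mul_comm q p, ← hj]; exact hj2'
        exact Nat.le_of_mul_le_mul_right h10 hp.pos
      have hqc : q ≤ c := by
        have h7 : p * q ≤ p * c := by rw [← hj]; omega
        exact Nat.le_of_mul_le_mul_left h7 hp.pos
      have hkj : p * c - j = p * (c - q) := by rw [hj, ← Nat.mul_sub]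
      have htj : d * p ^ (e+1) - j = p * (d * p ^ e - q) := by
        have h11 : d * p ^ (e+1) = p * (d * p ^ e) := by rw [pow_succ]; ring
        rw [hj, h11, ← Nat.mul_sub]
      rw [lucas_dvd' hp, hkj, htj, Nat.mul_mod_right, Nat.mul_mod_right,
        Nat.mul_div_cancel_left _ hp.pos, Nat.mul_div_cancel_left _ hp.pos,
        Nat.choose_zero_right, one_mul]
      exact ih c q hdvd' hdc hq1 hq2
    · -- r ≥ 1
      have hq2 : q + 1 ≤ d * p ^ e := by
        have h8 : p * q < p * (d * p ^ e) := by
          calc p * q < j := by omega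
          _ ≤ (d * p ^ e) * p := hj2'
          _ = p * (d * p ^ e) := by ring
        exact Nat.lt_of_mul_lt_mul_left h8
      have hqc : q + 1 ≤ c := by
        have h9 : p * q < p * c := by
          calc p * q < j := by omega
          _ ≤ d * p ^ (e+1) := hj2
          _ ≤ p * c := hle
        exact Nat.lt_of_mul_lt_mul_left h9
      obtain ⟨m, hm⟩ := Nat.exists_eq_add_of_le hqc
      obtain ⟨m', hm'⟩ := Nat.exists_eq_add_of_le hq2
      have hkj : p * c - j = (p - r) + p * m := by
        rw [hm, ← hjqr]
        have h1 : p * (q + 1 + m) = (p * q + r) + ((p - r) + p * m) := by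
          have : r ≤ p := le_of_lt hrp
          zify [this]
          ring
        rw [h1, Nat.add_sub_cancel_left]
      have htj : d * p ^ (e+1) - j = (p - r) + p * m' := by
        have ht : d * p ^ (e+1) = p * (q + 1 + m') := by
          rw [pow_succ, ← mul_assoc, mul_comm (d * p ^ e) p, hm']
        rw [ht, ← hjqr]
        have h1 : p * (q + 1 + m') = (p * q + r) + ((p - r) + p * m') := by
          have : r ≤ p := le_of_lt hrp
          zify [this]
          ring
        rw [h1, Nat.add_sub_cancel_left]
      have hmod : ∀ a : ℕ, ((p - r) + p * a) % p = p - r := by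
        intro a
        rw [Nat.add_mul_mod_self_left, Nat.mod_eq_of_lt (by omega)]
      have hdiv : ∀ a : ℕ, ((p - r) + p * a) / p = a := by
        intro a
        rw [Nat.add_mul_div_left _ _ hp.pos, Nat.div_eq_of_lt (by omega), Nat.zero_add]
      rw [lucas_dvd' hp, hkj, htj, hmod, hmod, hdiv, hdiv, Nat.choose_self, one_mul]
      have := ih c (q + 1) hdvd' hdc (Nat.succ_le_succ (Nat.zero_le q)) hq2
      have hcm : c - (q + 1) = m := by rw [hm, Nat.add_sub_cancel_left]
      have hdm : d * p ^ e - (q + 1) = m' := by rw [hm', Nat.add_sub_cancel_left]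
      rw [hcm, hdm] at this
      exact this

end Auxiliary

section Combinatorial

open Finset

variable {α : Type*} [DecidableEq α] {p : ℕ}

private lemma sum_insert_eq (x : Finset α → ZMod p) {V K : Finset α} {c : α} {s m : ℕ}
    (hc : c ∈ V) (hKV : K ⊆ V) (hcK : c ∉ K) (hm : 1 ≤ m) (hKcard : K.card = m - 1)
    (hrel : ∀ K' ⊆ V, K'.card = m → ∑ T ∈ K'.powersetCard (s+1), x T = 0) :
    ∑ S ∈ K.powersetCard s, x (insert c S) = - ∑ T ∈ K.powersetCard (s+1), x T := by
  have hIns : insert c K ⊆ V := insert_subset hc hKV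
  have hcard : (insert c K).card = m := by
    rw [card_insert_of_notMem hcK, hKcard]; omega
  have hxK := hrel (insert c K) hIns hcard
  rw [Finset.powersetCard_succ_insert hcK, Finset.sum_union, Finset.sum_image] at hxK
  · linear_combination hxK
  · intro S hS S' hS' hEq
    have haS : c ∉ S := fun hcS => hcK ((mem_powersetCard.mp hS).1 hcS)
    have haS' : c ∉ S' := fun hcS => hcK ((mem_powersetCard.mp hS').1 hcS)
    have := congrArg (fun t => Finset.erase t c) hEq
    simpa [Finset.erase_insert haS, Finset.erase_insert haS'] using this
  · rw [Finset.disjoint_right]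
    intro T hT hT'
    obtain ⟨S, hS, rfl⟩ := Finset.mem_image.mp hT
    have : c ∈ insert c S := mem_insert_self c S
    exact hcK ((mem_powersetCard.mp hT').1 this)

private lemma swap_lemma (x : Finset α → ZMod p) {V : Finset α} {s m : ℕ}
    (hm : s + 1 ≤ m) (hVc : s + 1 + m ≤ V.card)
    (hrel : ∀ K ⊆ V, K.card = m → ∑ T ∈ K.powersetCard (s+1), x T = 0)
    (hker : ∀ (V' : Finset α) (g : Finset α → ZMod p), V' ⊆ V → s + (m-1) ≤ V'.card →
      (∀ K ⊆ V', K.card = m-1 → ∑ S ∈ K.powersetCard s, g S = 0) →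
      ∀ S ⊆ V', S.card = s → g S = 0) :
    ∀ a ∈ V, ∀ b ∈ V, a ≠ b → ∀ S ⊆ V, a ∉ S → b ∉ S → S.card = s →
      x (insert a S) = x (insert b S) := by
  intro a ha b hb hab S hSV haS hbS hScard
  set V' := (V.erase a).erase b with hV'
  have hV'sub : V' ⊆ V := (erase_subset _ _).trans (erase_subset _ _)
  have hbV : b ∈ V.erase a := mem_erase.mpr ⟨hab.symm, hb⟩
  have hV'card : V'.card = V.card - 2 := by
    rw [hV', card_erase_of_mem hbV, card_erase_of_mem ha]; omega
  have hg := hker V' (fun S => x (insert a S) - x (insert b S)) hV'sub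
    (by omega) ?_ S ?_ hScard
  · exact sub_eq_zero.mp hg
  · intro K hKV' hKcard
    have haK : a ∉ K := fun h => by
      have := hKV' h
      simp [hV', Finset.mem_erase] at this
    have hbK : b ∉ K := fun h => by
      have := hKV' h
      simp [hV', Finset.mem_erase] at this
    have hKV : K ⊆ V := hKV'.trans hV'sub
    rw [Finset.sum_sub_distrib,
      sum_insert_eq x ha hKV haK (by omega) hKcard hrel,
      sum_insert_eq x hb hKV hbK (by omega) hKcard hrel]
    ring
  · intro y hy
    simp only [hV', Finset.mem_erase]
    exact ⟨fun h => hbS (h ▸ hy), fun h => haS (h ▸ hy), hSV hy⟩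

private lemma const_of_swap (x : Finset α → ZMod p) {V : Finset α} {s : ℕ}
    (hswap : ∀ a ∈ V, ∀ b ∈ V, a ≠ b → ∀ S ⊆ V, a ∉ S → b ∉ S → S.card = s →
      x (insert a S) = x (insert b S)) :
    ∀ T ⊆ V, T.card = s + 1 → ∀ T' ⊆ V, T'.card = s + 1 → x T = x T' := by
  suffices h : ∀ n (T : Finset α), T ⊆ V → T.card = s + 1 → ∀ T' ⊆ V, T'.card = s + 1 →
      (T \ T').card = n → x T = x T' by
    intro T hT hTc T' hT' hT'c
    exact h (T \ T').card T hT hTc T' hT' hT'c rfl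
  intro n
  induction n using Nat.strong_induction_on with
  | _ n ih =>
    intro T hTV hTc T' hT'V hT'c hn
    rcases Nat.eq_zero_or_pos n with h0 | hpos
    · have hsub : T ⊆ T' := by
        rw [h0] at hn
        intro y hy
        by_contra hyT'
        have : y ∈ T \ T' := Finset.mem_sdiff.mpr ⟨hy, hyT'⟩
        rw [Finset.card_eq_zero.mp hn] at this
        exact absurd this (Finset.notMem_empty y)
      rw [Finset.eq_of_subset_of_card_le hsub (by omega)]
    · obtain ⟨a, haTT'⟩ := Finset.card_pos.mp (hn ▸ hpos)
      have hcomm : (T' \ T).card = (T \ T').card := by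
        rw [Finset.card_sdiff_comm (hTc.trans hT'c.symm)]
      obtain ⟨b, hbT'T⟩ := Finset.card_pos.mp (by rw [hcomm, hn]; exact hpos)
      obtain ⟨haT, haT'⟩ := Finset.mem_sdiff.mp haTT'
      obtain ⟨hbT', hbT⟩ := Finset.mem_sdiff.mp hbT'T
      set S := T.erase a with hS
      have hSV : S ⊆ V := (Finset.erase_subset _ _).trans hTV
      have haS : a ∉ S := Finset.notMem_erase _ _
      have hbS : b ∉ S := fun h => hbT (Finset.mem_of_mem_erase h)
      have hScard : S.card = s := by
        rw [hS, Finset.card_erase_of_mem haT, hTc]; omega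
      have hab : a ≠ b := fun h => hbT (h ▸ haT)
      have step : x T = x (insert b S) := by
        rw [← Finset.insert_erase haT]
        exact hswap a (hTV haT) b (hT'V hbT') hab S hSV haS hbS hScard
      have hT''V : insert b S ⊆ V := Finset.insert_subset (hT'V hbT') hSV
      have hT''c : (insert b S).card = s + 1 := by
        rw [Finset.card_insert_of_notMem hbS, hScard]
      have hsmaller : ((insert b S) \ T').card < n := by
        have hsub2 : (insert b S) \ T' ⊆ (T \ T').erase a := by
          intro y hy
          obtain ⟨hy1, hy2⟩ := Finset.mem_sdiff.mp hy
          rcases Finset.mem_insert.mp hy1 with rfl | hyS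
          · exact absurd hbT' hy2
          · exact Finset.mem_erase.mpr ⟨fun h => haS (h ▸ hyS),
              Finset.mem_sdiff.mpr ⟨Finset.mem_of_mem_erase hyS, hy2⟩⟩
        calc ((insert b S) \ T').card ≤ ((T \ T').erase a).card := Finset.card_le_card hsub2
        _ = n - 1 := by rw [Finset.card_erase_of_mem haTT', hn]
        _ < n := by omega
      rw [step]
      exact ih _ hsmaller (insert b S) hT''V hT''c T' hT'V hT'c rfl

private lemma ker_trivial (hp : p.Prime) :
    ∀ (s m : ℕ) (V : Finset α) (x : Finset α → ZMod p),
      s + m ≤ V.card → s ≤ m →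
      (∀ i ≤ s, ¬ p ∣ (m - i).choose (s - i)) →
      (∀ K ⊆ V, K.card = m → ∑ T ∈ K.powersetCard s, x T = 0) →
      ∀ T ⊆ V, T.card = s → x T = 0 := by
  haveI : Fact p.Prime := ⟨hp⟩
  intro s
  induction s with
  | zero =>
    intro m V x hcard _ _ hx T hTV hTc
    obtain ⟨K, hKV, hKc⟩ := Finset.exists_subset_card_eq (le_trans (Nat.le_add_left m 0) hcard)
    have := hx K hKV hKc
    rw [Finset.powersetCard_zero, Finset.sum_singleton] at this
    rwa [Finset.card_eq_zero.mp hTc]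
  | succ s ih =>
    intro m V x hcard hsm hdig hx T₀ hT₀V hT₀c
    have hswap := swap_lemma x hsm hcard hx ?hker
    case hker =>
      intro V' g hV'V hV'c hg
      refine ih (m-1) V' g hV'c (by omega) ?_ hg
      intro i hi
      have h1 : m - 1 - i = m - (i+1) := by omega
      have h2 : s - i = s + 1 - (i+1) := by omega
      rw [h1, h2]
      exact hdig (i+1) (by omega)
    have hconst := const_of_swap x hswap
    obtain ⟨K, hKV, hKc⟩ := Finset.exists_subset_card_eq (le_trans (Nat.le_add_left m (s+1)) hcard)
    have hsum := hx K hKV hKc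
    have hrw : ∀ T ∈ K.powersetCard (s+1), x T = x T₀ := by
      intro T hT
      obtain ⟨hTK, hTc⟩ := Finset.mem_powersetCard.mp hT
      exact hconst T (hTK.trans hKV) hTc T₀ hT₀V hT₀c
    rw [Finset.sum_congr rfl hrw, Finset.sum_const, Finset.card_powersetCard, hKc,
      nsmul_eq_mul] at hsum
    have hne : ((m.choose (s+1) : ℕ) : ZMod p) ≠ 0 := by
      rw [Ne, ZMod.natCast_eq_zero_iff]
      have := hdig 0 (Nat.zero_le _)
      simpa using this
    exact (mul_eq_zero.mp hsum).elim (fun h => absurd h hne) id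

private lemma filter_subset_powersetCard (V K : Finset α) (t : ℕ) (hKV : K ⊆ V) :
    (V.powersetCard t).filter (fun A => A ⊆ K) = K.powersetCard t := by
  ext A
  simp only [Finset.mem_filter, Finset.mem_powersetCard]
  constructor
  · rintro ⟨⟨_, h2⟩, h3⟩; exact ⟨h3, h2⟩
  · rintro ⟨h1, h2⟩; exact ⟨⟨h1.trans hKV, h2⟩, h1⟩

private lemma entry_eq (V : Finset α) (t k : ℕ) (x : ↥(V.powersetCard t) → ZMod p)
    (y : Finset α → ZMod p)
    (hy : ∀ (T : Finset α) (h : T ∈ V.powersetCard t), y T = x ⟨T, h⟩)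
    (K : Finset α) (hK : K ∈ V.powersetCard k) :
    Matrix.vecMul x (Matrix.of (fun (T : ↥(V.powersetCard t)) (K : ↥(V.powersetCard k)) =>
        if (T : Finset α) ⊆ (K : Finset α) then (1 : ZMod p) else 0)) ⟨K, hK⟩
      = ∑ T ∈ K.powersetCard t, y T := by
  have hKV : K ⊆ V := (Finset.mem_powersetCard.mp hK).1
  rw [← filter_subset_powersetCard V K t hKV]
  rw [Finset.sum_filter]
  simp only [Matrix.vecMul, dotProduct, Matrix.of_apply]
  rw [Finset.univ_eq_attach, ← Finset.sum_attach (V.powersetCard t)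
    (fun T => if T ⊆ K then y T else 0)]
  refine Finset.sum_congr rfl ?_
  intro i _
  rw [hy i.1 i.2, mul_ite, mul_one, mul_zero]

end Combinatorial

/-- If `t` has a single nonzero base-`p` digit (at position `t(p) = log p t`) and
`p^(t(p)+1) ∣ k`, with `t ≤ min (k, v-k)`, then over `ℤ/pℤ` the kernel of the transpose
of the inclusion matrix `W_{t,k}` consists exactly of the constant (scalar multiples of
the all-ones) vectors. -/
theorem inclusion_matrix_kernel_one_dim_mod_p {α : Type*} [DecidableEq α]
    (V : Finset α) (p t k : ℕ) (hp : p.Prime) (ht : 0 < t)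
    (hsingle : t = (Nat.digits p t).getD (Nat.log p t) 0 * p ^ (Nat.log p t))
    (hkdvd : p ^ (Nat.log p t + 1) ∣ k)
    (htk : t ≤ k) (htv : t + k ≤ V.card) :
    ∀ x : ↥(V.powersetCard t) → ZMod p,
      Matrix.vecMul x (Matrix.of (fun (T : ↥(V.powersetCard t)) (K : ↥(V.powersetCard k)) =>
        if (T : Finset α) ⊆ (K : Finset α) then (1 : ZMod p) else 0)) = 0
      ↔ ∃ c : ZMod p, x = Function.const _ c := by
  haveI : Fact p.Prime := ⟨hp⟩
  obtain ⟨d, e, hd, hdp, ht', hkd⟩ :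
      ∃ d e, 0 < d ∧ d < p ∧ t = d * p ^ e ∧ p ^ (e + 1) ∣ k := by
    refine ⟨(Nat.digits p t).getD (Nat.log p t) 0, Nat.log p t, ?_, ?_, hsingle, hkdvd⟩
    · rcases Nat.eq_zero_or_pos ((Nat.digits p t).getD (Nat.log p t) 0) with h | h
      · rw [h, zero_mul] at hsingle; omega
      · exact h
    · by_cases hlen : Nat.log p t < (Nat.digits p t).length
      · have hmem : (Nat.digits p t).getD (Nat.log p t) 0 ∈ Nat.digits p t := by
          rw [List.getD_eq_getElem _ _ hlen]
          exact List.getElem_mem _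
        exact Nat.digits_lt_base hp.two_le hmem
      · rw [List.getD_eq_default _ _ (le_of_not_gt hlen)]
        exact hp.pos
  obtain ⟨s, rfl⟩ : ∃ s, t = s + 1 := ⟨t - 1, by omega⟩
  intro x
  set y : Finset α → ZMod p :=
    fun T => if h : T ∈ V.powersetCard (s+1) then x ⟨T, h⟩ else 0 with hy
  have hyx : ∀ (T : Finset α) (h : T ∈ V.powersetCard (s+1)), y T = x ⟨T, h⟩ :=
    fun T h => dif_pos h
  constructor
  · intro hker0
    have hrel : ∀ K ⊆ V, K.card = k → ∑ T ∈ K.powersetCard (s+1), y T = 0 := by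
      intro K hKV hKc
      have hK : K ∈ V.powersetCard k := Finset.mem_powersetCard.mpr ⟨hKV, hKc⟩
      have h0 := congrFun hker0 ⟨K, hK⟩
      rwa [entry_eq V (s+1) k x y hyx K hK] at h0
    have hswap := swap_lemma y htk htv hrel ?hker
    case hker =>
      intro V' g hV'V hV'c hg
      refine ker_trivial hp s (k-1) V' g hV'c (by omega) ?_ hg
      intro i hi
      have h1 : k - 1 - i = k - (i+1) := by omega
      have h2 : s - i = s + 1 - (i+1) := by omega
      rw [h1, h2, ht']
      refine lemB hp hd hdp e k (i+1) hkd ?_ (by omega) ?_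
      · rw [← ht']; exact htk
      · rw [← ht']; omega
    have hconst := const_of_swap y hswap
    obtain ⟨T₀, hT₀V, hT₀c⟩ := Finset.exists_subset_card_eq
      (show s + 1 ≤ V.card by omega)
    have hT₀ : T₀ ∈ V.powersetCard (s+1) := Finset.mem_powersetCard.mpr ⟨hT₀V, hT₀c⟩
    refine ⟨x ⟨T₀, hT₀⟩, funext fun i => ?_⟩
    obtain ⟨T, hT⟩ := i
    obtain ⟨hTV, hTc⟩ := Finset.mem_powersetCard.mp hT
    have : x ⟨T, hT⟩ = y T := (hyx T hT).symm
    rw [Function.const_apply, this, hconst T hTV hTc T₀ hT₀V hT₀c, hyx T₀ hT₀]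
  · rintro ⟨c, rfl⟩
    funext K0
    obtain ⟨K, hK⟩ := K0
    obtain ⟨hKV, hKc⟩ := Finset.mem_powersetCard.mp hK
    have hyc : ∀ (T : Finset α) (h : T ∈ V.powersetCard (s+1)),
        (fun _ : Finset α => c) T = Function.const (↥(V.powersetCard (s+1))) c ⟨T, h⟩ := fun T h => rfl
    rw [Pi.zero_apply, entry_eq V (s+1) k (Function.const _ c) (fun _ => c) hyc K hK,
      Finset.sum_const, Finset.card_powersetCard, hKc, nsmul_eq_mul]
    have hz : ((k.choose (s+1) : ℕ) : ZMod p) = 0 := by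
      rw [ZMod.natCast_eq_zero_iff]
      rw [ht']
      exact lemC hp hd hdp e k hkd (by rw [← ht']; exact htk)
    rw [hz, zero_mul]
end

section
/- Let p ≥ 3 be prime and k an integer with 2 ≤ k ≤ v-2 and k not congruent to 0 or 1 mod p. Let G and G' be graphs on the same vertex set V of size v such that for every k-element subset K of V, the number of edges of G restricted to K is congruent mod p to the number of edges of G' restricted to K. Then G = G'. -/
/-- Number of edges of the induced subgraph of `G` on a subset `K`. -/
def edgeCountOn {V : Type*} [Fintype V] [DecidableEq V] (G : SimpleGraph V)
    [DecidableRel G.Adj] (K : Finset V) : ℕ :=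
  (G.edgeFinset.filter (· ∈ K.sym2)).card

lemma sum_edgeCountOn_erase {V : Type*} [Fintype V] [DecidableEq V] (G : SimpleGraph V)
    [DecidableRel G.Adj] (S : Finset V) :
    ∑ x ∈ S, edgeCountOn G (S.erase x) = (S.card - 2) * edgeCountOn G S := by
  unfold edgeCountOn
  simp only [Finset.card_filter]
  rw [Finset.sum_comm, Finset.mul_sum]
  refine Finset.sum_congr rfl fun e he => ?_
  induction e using Sym2.inductionOn with
  | hf x y =>
    have hadj : G.Adj x y := by simpa using he
    have hxy : x ≠ y := hadj.ne
    by_cases hx : x ∈ S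
    · by_cases hy : y ∈ S
      · have hmem : s(x, y) ∈ S.sym2 := Finset.mk_mem_sym2_iff.2 ⟨hx, hy⟩
        rw [if_pos hmem, mul_one]
        rw [← Finset.card_filter]
        have : S.filter (fun z => s(x, y) ∈ (S.erase z).sym2) = (S.erase x).erase y := by
          ext z
          simp only [Finset.mem_filter, Finset.mk_mem_sym2_iff, Finset.mem_erase]
          constructor
          · rintro ⟨hz, ⟨hxz, -⟩, ⟨hyz, -⟩⟩
            exact ⟨fun h => hyz h.symm, fun h => hxz h.symm, hz⟩
          · rintro ⟨hzy, hzx, hz⟩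
            exact ⟨hz, ⟨fun h => hzx h.symm, hx⟩, ⟨fun h => hzy h.symm, hy⟩⟩
        rw [this, Finset.card_erase_of_mem (Finset.mem_erase.2 ⟨hxy.symm, hy⟩),
          Finset.card_erase_of_mem hx]
        omega
      · have hmem : s(x, y) ∉ S.sym2 := fun hc => hy (Finset.mk_mem_sym2_iff.1 hc).2
        rw [if_neg hmem, mul_zero]
        refine Finset.sum_eq_zero fun z _ => ?_
        rw [if_neg]
        intro hc
        exact hy (Finset.mem_erase.1 (Finset.mk_mem_sym2_iff.1 hc).2).2
    · have hmem : s(x, y) ∉ S.sym2 := fun hc => hx (Finset.mk_mem_sym2_iff.1 hc).1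
      rw [if_neg hmem, mul_zero]
      refine Finset.sum_eq_zero fun z _ => ?_
      rw [if_neg]
      intro hc
      exact hx (Finset.mem_erase.1 (Finset.mk_mem_sym2_iff.1 hc).1).2

/-- Inclusion–exclusion identity on a set `S` containing `a ≠ b`. -/
lemma edgeCountOn_incl_excl {V : Type*} [Fintype V] [DecidableEq V] (G : SimpleGraph V)
    [DecidableRel G.Adj] (S : Finset V) (a b : V) (ha : a ∈ S) (hb : b ∈ S) (hab : a ≠ b) :
    edgeCountOn G S + edgeCountOn G ((S.erase a).erase b)
      = edgeCountOn G (S.erase a) + edgeCountOn G (S.erase b)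
        + (if G.Adj a b then 1 else 0) := by
  unfold edgeCountOn
  simp only [Finset.card_filter]
  have hsb : (if G.Adj a b then 1 else 0 : ℕ)
      = ∑ e ∈ G.edgeFinset, (if e = s(a, b) then 1 else 0) := by
    by_cases hadj : G.Adj a b <;>
      simp [Finset.sum_ite_eq', SimpleGraph.mem_edgeFinset, SimpleGraph.mem_edgeSet, hadj]
  rw [hsb, ← Finset.sum_add_distrib, ← Finset.sum_add_distrib, ← Finset.sum_add_distrib]
  refine Finset.sum_congr rfl fun e he => ?_
  induction e using Sym2.inductionOn with
  | hf x y =>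
    have hadj : G.Adj x y := by simpa using he
    have hxy : x ≠ y := hadj.ne
    simp only [Finset.mk_mem_sym2_iff, Finset.mem_erase, Sym2.eq_iff]
    by_cases hx : x ∈ S <;> by_cases hy : y ∈ S <;>
      by_cases hxa : x = a <;> by_cases hxb : x = b <;>
      by_cases hya : y = a <;> by_cases hyb : y = b <;>
      simp_all <;> omega

lemma edgeCountOn_congr_step {V : Type*} [Fintype V] [DecidableEq V]
    (G G' : SimpleGraph V) [DecidableRel G.Adj] [DecidableRel G'.Adj]
    (p m : ℕ) (hp : p.Prime) (hcop : ((m - 1 : ℕ) : ZMod p) ≠ 0)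
    (h : ∀ K : Finset V, K.card = m → edgeCountOn G K ≡ edgeCountOn G' K [MOD p]) :
    ∀ S : Finset V, S.card = m + 1 → edgeCountOn G S ≡ edgeCountOn G' S [MOD p] := by
  intro S hS
  have := Fact.mk hp
  rw [← ZMod.natCast_eq_natCast_iff]
  have hsum : ((∑ x ∈ S, edgeCountOn G (S.erase x) : ℕ) : ZMod p)
      = ((∑ x ∈ S, edgeCountOn G' (S.erase x) : ℕ) : ZMod p) := by
    push_cast
    refine Finset.sum_congr rfl fun x hx => ?_
    have hcard : (S.erase x).card = m := by
      rw [Finset.card_erase_of_mem hx, hS]; omega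
    exact (ZMod.natCast_eq_natCast_iff _ _ _).2 (h _ hcard)
  rw [sum_edgeCountOn_erase, sum_edgeCountOn_erase, hS] at hsum
  have hm1 : m + 1 - 2 = m - 1 := by omega
  rw [hm1] at hsum
  push_cast at hsum
  exact mul_left_cancel₀ hcop hsum

/-- If `p ≥ 3` is prime, `2 ≤ k ≤ v - 2` and `k ≢ 0, 1 (mod p)`, and the edge counts of
`G` and `G'` agree mod `p` on all `k`-sets, then `G = G'`. -/
theorem graphs_eq_of_edgeCount_mod_p {V : Type*} [Fintype V] [DecidableEq V]
    (G G' : SimpleGraph V) [DecidableRel G.Adj] [DecidableRel G'.Adj]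
    (p k : ℕ) (hp : p.Prime) (hp3 : 3 ≤ p)
    (hk2 : 2 ≤ k) (hkv : k + 2 ≤ Fintype.card V)
    (h0 : k % p ≠ 0) (h1 : k % p ≠ 1)
    (h : ∀ K : Finset V, K.card = k → edgeCountOn G K ≡ edgeCountOn G' K [MOD p]) :
    G = G' := by
  have := Fact.mk hp
  have hk1ne : ((k - 1 : ℕ) : ZMod p) ≠ 0 := by
    simp only [ne_eq, ZMod.natCast_eq_zero_iff]
    rintro ⟨t, ht⟩
    apply h1
    have hk : k = p * t + 1 := by omega
    rw [hk, Nat.mul_add_mod]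
    exact Nat.one_mod_eq_one.2 (by omega)
  have hkne : ((k + 1 - 1 : ℕ) : ZMod p) ≠ 0 := by
    have : k + 1 - 1 = k := rfl
    rw [this]
    simp only [ne_eq, ZMod.natCast_eq_zero_iff]
    rintro ⟨t, ht⟩
    apply h0
    rw [ht, Nat.mul_mod_right]
  have h2 := edgeCountOn_congr_step G G' p k hp hk1ne h
  have h3 := edgeCountOn_congr_step G G' p (k + 1) hp hkne h2
  ext a b
  by_cases hab : a = b
  · subst hab; simp
  · obtain ⟨S, hsub, -, hScard⟩ := Finset.exists_subsuperset_card_eq (n := k + 2)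
      (Finset.subset_univ ({a, b} : Finset V))
      (by rw [Finset.card_insert_of_notMem (by simpa using hab), Finset.card_singleton]; omega)
      (by simpa using hkv)
    have ha : a ∈ S := hsub (by simp)
    have hb : b ∈ S := hsub (by simp)
    have hIE := edgeCountOn_incl_excl G S a b ha hb hab
    have hIE' := edgeCountOn_incl_excl G' S a b ha hb hab
    have cS : edgeCountOn G S ≡ edgeCountOn G' S [MOD p] := h3 S (by omega)
    have cSa : edgeCountOn G (S.erase a) ≡ edgeCountOn G' (S.erase a) [MOD p] :=
      h2 _ (by rw [Finset.card_erase_of_mem ha, hScard]; omega)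
    have cSb : edgeCountOn G (S.erase b) ≡ edgeCountOn G' (S.erase b) [MOD p] :=
      h2 _ (by rw [Finset.card_erase_of_mem hb, hScard]; omega)
    have cSab : edgeCountOn G ((S.erase a).erase b) ≡ edgeCountOn G' ((S.erase a).erase b) [MOD p] :=
      h _ (by rw [Finset.card_erase_of_mem (Finset.mem_erase.2 ⟨Ne.symm hab, hb⟩),
        Finset.card_erase_of_mem ha, hScard]; omega)
    rw [← ZMod.natCast_eq_natCast_iff] at cS cSa cSb cSab
    have key : ((if G.Adj a b then 1 else 0 : ℕ) : ZMod p)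
        = ((if G'.Adj a b then 1 else 0 : ℕ) : ZMod p) := by
      have e1 : ((edgeCountOn G S + edgeCountOn G ((S.erase a).erase b) : ℕ) : ZMod p)
          = ((edgeCountOn G' S + edgeCountOn G' ((S.erase a).erase b) : ℕ) : ZMod p) := by
        push_cast; rw [cS, cSab]
      rw [hIE, hIE'] at e1
      push_cast at e1 cSa cSb ⊢
      rw [cSa, cSb] at e1
      linear_combination e1
    by_cases hG : G.Adj a b <;> by_cases hG' : G'.Adj a b <;>
      simp only [hG, hG', if_true, if_false, Nat.cast_one, Nat.cast_zero] at key <;>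
      simp [hG, hG']
    · exact one_ne_zero key
    · exact one_ne_zero key.symm
end

section
/- Let p ≥ 3 be prime and k an integer with 2 ≤ k ≤ v-2 and p | k. Let G and G' be graphs on the same vertex set V of size v such that for every k-element subset K of V, e(G|_K) ≡ e(G'|_K) (mod p). Then G = G', or one of G, G' is the complete graph on V and the other is the empty graph on V. -/
/-!
Let `A` be the difference of the adjacency matrices of `G` and `G'` over `ZMod p`, and `S(L)` the
sum of `A` over `L × L`. As `S(K)` is twice the difference of the edge counts on `K`, it vanishes
on every `k`-set. Summing `S(L \ {a})` over `a ∈ L` for a `(k + 1)`-set `L` gives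
`(k - 1) S(L) = 0`, so `S(L) = 0` because `p ∣ k`; then `S(L) - S(L \ {a}) = 2 ∑_{y ∈ L} A a y`
shows, `p` being odd, that the row sums of `A` over `(k + 1)`-sets vanish. Exchanging a vertex `y`
of such a set for an outside vertex `z` gives `A x y = A x z`, so `A` is constant off the
diagonal, and its three possible values `0`, `1`, `-1` give the three alternatives.
-/

open Finset

section EdgeCount

variable {V : Type*} [Fintype V] [DecidableEq V]

theorem SimpleGraph.two_mul_edgeCountOn (G : SimpleGraph V) [DecidableRel G.Adj]
    (K : Finset V) : 2 * edgeCountOn G K = #((K ×ˢ K).filter fun xy => G.Adj xy.1 xy.2) := by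
  let H := G ⊓ fromRel fun x y => x ∈ K ∧ y ∈ K
  have hH : H.edgeFinset = G.edgeFinset.filter (· ∈ K.sym2) := by
    ext e
    induction e using Sym2.ind with
    | _ x y =>
      simp only [H, mem_filter, mem_edgeFinset, mem_edgeSet, mk_mem_sym2_iff, inf_adj,
        fromRel_adj]
      grind [Adj.ne]
  rw [edgeCountOn, ← hH]
  convert two_mul_card_edgeFinset H using 2
  · congr!
  ext ⟨x, y⟩
  simp only [H, mem_filter, mem_univ, mem_product, inf_adj, fromRel_adj]
  grind [Adj.ne]

theorem SimpleGraph.sum_sum_adjMatrix {R : Type*} [AddCommMonoidWithOne R] (G : SimpleGraph V)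
    [DecidableRel G.Adj] (K : Finset V) :
    ∑ x ∈ K, ∑ y ∈ K, G.adjMatrix R x y = ((2 * edgeCountOn G K : ℕ) : R) := by
  rw [two_mul_edgeCountOn, ← sum_boole, sum_product]
  rfl

end EdgeCount

namespace Matrix

variable {V R : Type*} [DecidableEq V] [CommRing R] {A : Matrix V V R}

theorem sum_sum_erase (hA : A.IsSymm) {L : Finset V} {a : V} (ha : a ∈ L) :
    ∑ x ∈ L.erase a, ∑ y ∈ L.erase a, A x y =
      ∑ x ∈ L, ∑ y ∈ L, A x y - 2 * ∑ y ∈ L, A a y + A a a := by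
  simp only [sum_erase_eq_sub ha, sum_sub_distrib]
  rw [sum_congr rfl fun x _ => hA.apply a x]
  ring

variable {k : ℕ} (hA : A.IsSymm) (hdiag : ∀ x, A x x = 0) (hk : (k : R) = 0)
  (hS : ∀ K : Finset V, #K = k → ∑ x ∈ K, ∑ y ∈ K, A x y = 0)
include hA hdiag hk hS

theorem sum_sum_eq_zero_of_card_eq_succ {L : Finset V} (hL : #L = k + 1) :
    ∑ x ∈ L, ∑ y ∈ L, A x y = 0 := by
  have hsum : ∑ a ∈ L, ∑ x ∈ L.erase a, ∑ y ∈ L.erase a, A x y = 0 :=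
    sum_eq_zero fun a ha => hS _ (by rw [card_erase_of_mem ha, hL]; rfl)
  rw [sum_congr rfl fun a ha => sum_sum_erase hA ha] at hsum
  simp only [hdiag, add_zero, sum_sub_distrib, sum_const, ← mul_sum, hL, nsmul_eq_mul] at hsum
  push_cast [hk] at hsum
  linear_combination -hsum

theorem sum_apply_eq_zero_of_card_eq_succ [NoZeroDivisors R] (h2 : (2 : R) ≠ 0)
    {L : Finset V} (hL : #L = k + 1) {a : V} (ha : a ∈ L) : ∑ y ∈ L, A a y = 0 := by
  have h := sum_sum_erase hA ha
  rw [hS _ (by rw [card_erase_of_mem ha, hL]; rfl),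
    sum_sum_eq_zero_of_card_eq_succ hA hdiag hk hS hL, hdiag] at h
  have h2row : 2 * ∑ y ∈ L, A a y = 0 := by linear_combination h
  exact (mul_eq_zero.mp h2row).resolve_left h2

theorem apply_eq_apply_of_ne_of_ne [Fintype V] [NoZeroDivisors R] (h2 : (2 : R) ≠ 0)
    (hk1 : 1 ≤ k) (hkV : k + 2 ≤ Fintype.card V) {x y z : V} (hxy : x ≠ y) (hxz : x ≠ z) :
    A x y = A x z := by
  by_cases hyz : y = z
  · rw [hyz]
  obtain ⟨L, hxyL, hLz, hL⟩ := exists_subsuperset_card_eq (s := {x, y}) (t := univ.erase z)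
    (n := k + 1) (by simp [insert_subset_iff, hxz, hyz]) (by rw [card_pair hxy]; omega)
    (by rw [card_erase_of_mem (mem_univ z), card_univ]; omega)
  have hxL : x ∈ L := hxyL (mem_insert_self x _)
  have hyL : y ∈ L := hxyL (mem_insert_of_mem (mem_singleton_self y))
  have hzL : z ∉ L.erase y := fun hz => (mem_erase.mp (hLz (mem_of_mem_erase hz))).1 rfl
  have hrow := sum_apply_eq_zero_of_card_eq_succ hA hdiag hk hS h2 hL hxL
  have hrow' := sum_apply_eq_zero_of_card_eq_succ hA hdiag hk hS h2 (L := insert z (L.erase y))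
    (by rw [card_insert_of_notMem hzL, card_erase_of_mem hyL, hL]; omega)
    (mem_insert_of_mem (mem_erase.mpr ⟨hxy, hxL⟩))
  rw [← add_sum_erase _ _ hyL] at hrow
  rw [sum_insert hzL] at hrow'
  linear_combination hrow - hrow'

end Matrix

theorem Matrix.IsSymm.apply_eq_apply_of_rows_const {V α : Type*} {A : Matrix V V α}
    (hA : A.IsSymm) (h : ∀ x y z, x ≠ y → x ≠ z → A x y = A x z) {x y u w : V} (hxy : x ≠ y)
    (huw : u ≠ w) : A x y = A u w := by
  by_cases hxw : x = w
  · subst hxw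
    rw [h x y u hxy huw.symm, hA.apply]
  · rw [h x y w hxy hxw, ← hA.apply, h w x u (Ne.symm hxw) huw.symm, hA.apply]

namespace SimpleGraph

variable {V R : Type*} [Ring R] {G G' : SimpleGraph V} [DecidableRel G.Adj] [DecidableRel G'.Adj]

theorem eq_of_adjMatrix_sub_apply_eq_zero [Nontrivial R]
    (h : ∀ x y, x ≠ y → (G.adjMatrix R - G'.adjMatrix R) x y = 0) : G = G' := by
  ext x y
  by_cases hxy : x = y
  · simp [hxy]
  have := h x y hxy
  by_cases hG : G.Adj x y <;> by_cases hG' : G'.Adj x y <;> simp_all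

theorem eq_top_and_eq_bot_of_adjMatrix_sub_apply_eq_one (h2 : (2 : R) ≠ 0)
    (h : ∀ x y, x ≠ y → (G.adjMatrix R - G'.adjMatrix R) x y = 1) : G = ⊤ ∧ G' = ⊥ := by
  have : Nontrivial R := nontrivial_of_ne 2 0 h2
  have hneg : (-1 : R) ≠ 1 := fun h =>
    h2 (by rw [← one_add_one_eq_two]; nth_rw 1 [← h]; exact neg_add_cancel 1)
  have hadj : ∀ x y, x ≠ y → G.Adj x y ∧ ¬G'.Adj x y := by
    intro x y hxy
    have := h x y hxy
    by_cases hG : G.Adj x y <;> by_cases hG' : G'.Adj x y <;> simp_all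
  refine ⟨?_, ?_⟩ <;> ext x y
  · exact ⟨Adj.ne, fun hxy => (hadj x y hxy).1⟩
  · exact ⟨fun h' => (hadj x y h'.ne).2 h', False.elim⟩

theorem eq_or_extreme_of_adjMatrix_sub_apply_eq_apply (h2 : (2 : R) ≠ 0)
    (h : ∀ {x y u w}, x ≠ y → u ≠ w →
      (G.adjMatrix R - G'.adjMatrix R) x y = (G.adjMatrix R - G'.adjMatrix R) u w) :
    G = G' ∨ (G = ⊤ ∧ G' = ⊥) ∨ (G = ⊥ ∧ G' = ⊤) := by
  have : Nontrivial R := nontrivial_of_ne 2 0 h2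
  rcases subsingleton_or_nontrivial V with hV | hV
  · exact .inl (eq_of_adjMatrix_sub_apply_eq_zero (R := R) fun x y hxy =>
      (hxy (Subsingleton.elim x y)).elim)
  obtain ⟨x₀, y₀, hxy₀⟩ := exists_pair_ne V
  have hval : (G.adjMatrix R - G'.adjMatrix R) x₀ y₀ ∈ ({0, 1, -1} : Set R) := by
    simp only [Matrix.sub_apply, adjMatrix_apply]
    split_ifs <;> simp
  rcases hval with hval | hval | hval
  · exact .inl (eq_of_adjMatrix_sub_apply_eq_zero fun x y hxy => (h hxy hxy₀).trans hval)
  · exact .inr (.inl (eq_top_and_eq_bot_of_adjMatrix_sub_apply_eq_one h2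
      fun x y hxy => (h hxy hxy₀).trans hval))
  · refine .inr (.inr (eq_top_and_eq_bot_of_adjMatrix_sub_apply_eq_one h2 fun x y hxy => ?_).symm)
    rw [← neg_sub, Matrix.neg_apply, h hxy hxy₀, hval, neg_neg]

end SimpleGraph

/-- If `p ≥ 3` is prime, `p ∣ k`, `2 ≤ k ≤ v - 2`, and the edge counts of `G` and `G'`
agree mod `p` on all `k`-sets, then `G = G'`, or one of `G, G'` is complete and the
other empty. -/
theorem graphs_eq_or_extreme_of_edgeCount_mod_p {V : Type*} [Fintype V] [DecidableEq V]
    (G G' : SimpleGraph V) [DecidableRel G.Adj] [DecidableRel G'.Adj]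
    (p k : ℕ) (hp : p.Prime) (hp3 : 3 ≤ p)
    (hk2 : 2 ≤ k) (hkv : k + 2 ≤ Fintype.card V) (hpk : p ∣ k)
    (h : ∀ K : Finset V, K.card = k → edgeCountOn G K ≡ edgeCountOn G' K [MOD p]) :
    G = G' ∨ (G = ⊤ ∧ G' = ⊥) ∨ (G = ⊥ ∧ G' = ⊤) := by
  have := Fact.mk hp
  have h2 : (2 : ZMod p) ≠ 0 := by
    exact_mod_cast (ZMod.natCast_eq_zero_iff 2 p).not.mpr (Nat.not_dvd_of_pos_of_lt two_pos hp3)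
  have hk : (k : ZMod p) = 0 := (ZMod.natCast_eq_zero_iff k p).mpr hpk
  set A := G.adjMatrix (ZMod p) - G'.adjMatrix (ZMod p)
  have hA : A.IsSymm := G.isSymm_adjMatrix.sub G'.isSymm_adjMatrix
  have hdiag : ∀ x, A x x = 0 := by simp [A]
  have hS : ∀ K : Finset V, #K = k → ∑ x ∈ K, ∑ y ∈ K, A x y = 0 := fun K hK => by
    simp only [A, Matrix.sub_apply, sum_sub_distrib, SimpleGraph.sum_sum_adjMatrix,
      (ZMod.natCast_eq_natCast_iff _ _ _).mpr (Nat.ModEq.mul_left 2 (h K hK)), sub_self]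
  exact SimpleGraph.eq_or_extreme_of_adjMatrix_sub_apply_eq_apply h2
    (hA.apply_eq_apply_of_rows_const fun _ _ _ =>
      Matrix.apply_eq_apply_of_ne_of_ne hA hdiag hk hS h2 (by omega) hkv)
end

section
/- Let k be an integer with 2 ≤ k ≤ v-2 and k ≡ 2 (mod 4). Let G and G' be graphs on the same vertex set V of size v such that for every k-element subset K of V, e(G|_K) and e(G'|_K) have the same parity. Then G = G'. -/
/-!
Let `H = G ∆ G'`; the hypothesis says that every `k`-set spans an even number of edges of `H`.
Counting the pairs (`k`-set `K ⊆ L`, edge inside `K`) gives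
`∑_{K ⊆ L, |K| = k} e_H(K) = C(|L| - 2, k - 2) e_H(L)`, and for `k ≡ 2 (mod 4)` this binomial
coefficient is odd whenever `k ≤ |L| ≤ k + 2`, so all these sets `L` span an even number of
edges of `H` too. But if `ab` were an edge of `H`, then for a `k`-set `S` avoiding `a` and `b`,
`e_H(S + a + b) - e_H(S + a) - e_H(S + b) + e_H(S) = 1` would be odd.
-/

open Finset
open scoped symmDiff

theorem Finset.card_symmDiff_add_two_mul_card_inter {α : Type*} [DecidableEq α]
    (s t : Finset α) : #(s ∆ t) + 2 * #(s ∩ t) = #s + #t := by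
  have hdisj : Disjoint (s ∆ t) (s ∩ t) := disjoint_symmDiff_inf s t
  have hunion : #(s ∆ t) + #(s ∩ t) = #(s ∪ t) := by
    rw [← card_union_of_disjoint hdisj]
    exact congrArg card (symmDiff_sup_inf s t)
  rw [← card_union_add_card_inter s t, ← hunion]
  ring

theorem Finset.card_filter_powersetCard_mem_sym2 {α : Type*} [DecidableEq α] {L : Finset α}
    {e : Sym2 α} (he : e ∈ L.sym2) (hdiag : ¬e.IsDiag) {k : ℕ} (hk : 2 ≤ k) :
    #{K ∈ L.powersetCard k | e ∈ K.sym2} = (#L - 2).choose (k - 2) := by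
  induction e with
  | _ x y =>
    have hxy : #{x, y} = 2 := card_pair (by simpa using hdiag)
    have hsub : {x, y} ⊆ L := by simpa [insert_subset_iff] using he
    simp_rw [mk_mem_sym2_iff, ← insert_subset_iff.trans (and_congr_right' singleton_subset_iff)]
    rw [card_filter_powersetCard_subset _ _ _ hsub (hxy ▸ hk), hxy]

theorem Nat.odd_choose_sub_two {k n : ℕ} (hk : k % 4 = 2) (hkn : k ≤ n) (hnk : n ≤ k + 2) :
    Odd ((n - 2).choose (k - 2)) := by
  obtain ⟨m, rfl⟩ : ∃ m, k = 4 * m + 2 := ⟨k / 4, by omega⟩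
  obtain rfl | rfl | rfl : n = 4 * m + 2 ∨ n = 4 * m + 3 ∨ n = 4 * m + 4 := by omega
  · simp
  · rw [show 4 * m + 3 - 2 = 4 * m + 1 by omega, show 4 * m + 2 - 2 = 4 * m by omega,
      Nat.choose_succ_self_right]
    exact ⟨2 * m, by ring⟩
  · rw [show 4 * m + 4 - 2 = 4 * m + 2 by omega, show 4 * m + 2 - 2 = 4 * m by omega,
      Nat.choose_symm_of_eq_add rfl, Nat.choose_two_right,
      show 4 * m + 2 - 1 = 4 * m + 1 by omega, Nat.div_eq_of_eq_mul_left two_pos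
        (by ring : (4 * m + 2) * (4 * m + 1) = (2 * m + 1) * (4 * m + 1) * 2)]
    exact (odd_two_mul_add_one m).mul ⟨2 * m, by ring⟩

section EdgeCount

variable {V : Type*} [Fintype V] [DecidableEq V]

theorem even_edgeCountOn_symmDiff_iff (G G' : SimpleGraph V) [DecidableRel G.Adj]
    [DecidableRel G'.Adj] [DecidableRel (G ∆ G').Adj] (K : Finset V) :
    Even (edgeCountOn (G ∆ G') K) ↔ edgeCountOn G K ≡ edgeCountOn G' K [MOD 2] := by
  have hfilter : (G ∆ G').edgeFinset.filter (· ∈ K.sym2)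
      = G.edgeFinset.filter (· ∈ K.sym2) ∆ G'.edgeFinset.filter (· ∈ K.sym2) := by
    ext e
    induction e with
    | _ a b =>
      simp only [mem_symmDiff, mem_filter, SimpleGraph.mem_edgeFinset, SimpleGraph.mem_edgeSet]
      simp only [symmDiff_def, SimpleGraph.sup_adj, SimpleGraph.sdiff_adj]
      tauto
  have := card_symmDiff_add_two_mul_card_inter
    (G.edgeFinset.filter (· ∈ K.sym2)) (G'.edgeFinset.filter (· ∈ K.sym2))
  rw [← hfilter] at this
  unfold edgeCountOn Nat.ModEq
  rw [Nat.even_iff]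
  omega

theorem sum_edgeCountOn_powersetCard (H : SimpleGraph V) [DecidableRel H.Adj] (L : Finset V)
    {k : ℕ} (hk : 2 ≤ k) :
    ∑ K ∈ L.powersetCard k, edgeCountOn H K = (#L - 2).choose (k - 2) * edgeCountOn H L := by
  set E := H.edgeFinset.filter (· ∈ L.sym2)
  have hrestrict : ∀ K ∈ L.powersetCard k, edgeCountOn H K = #{e ∈ E | e ∈ K.sym2} := by
    intro K hK
    rw [edgeCountOn, filter_filter]
    refine congrArg card (filter_congr fun e _ => ?_)
    exact ⟨fun heK => ⟨sym2_mono (mem_powersetCard.1 hK).1 heK, heK⟩, And.right⟩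
  calc ∑ K ∈ L.powersetCard k, edgeCountOn H K
      = ∑ K ∈ L.powersetCard k, #{e ∈ E | e ∈ K.sym2} := sum_congr rfl hrestrict
    _ = ∑ e ∈ E, #{K ∈ L.powersetCard k | e ∈ K.sym2} :=
      sum_card_bipartiteAbove_eq_sum_card_bipartiteBelow _
    _ = ∑ _e ∈ E, (#L - 2).choose (k - 2) := by
      refine sum_congr rfl fun e he => ?_
      obtain ⟨heH, heL⟩ := mem_filter.1 he
      exact card_filter_powersetCard_mem_sym2 heL
        (H.not_isDiag_of_mem_edgeSet (SimpleGraph.mem_edgeFinset.1 heH)) hk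
    _ = (#L - 2).choose (k - 2) * edgeCountOn H L := by
      rw [sum_const, smul_eq_mul, mul_comm, edgeCountOn]

theorem even_edgeCountOn_of_odd_choose (H : SimpleGraph V) [DecidableRel H.Adj] {k : ℕ}
    (hk : 2 ≤ k) (heven : ∀ K : Finset V, #K = k → Even (edgeCountOn H K)) {L : Finset V}
    (hL : Odd ((#L - 2).choose (k - 2))) : Even (edgeCountOn H L) := by
  have hsum : Even (∑ K ∈ L.powersetCard k, edgeCountOn H K) :=
    even_sum _ fun K hK => heven K (mem_powersetCard.1 hK).2
  rw [sum_edgeCountOn_powersetCard H L hk] at hsum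
  exact (Nat.even_mul.1 hsum).resolve_left (Nat.not_even_iff_odd.2 hL)

theorem edgeCountOn_insert (H : SimpleGraph V) [DecidableRel H.Adj] {a : V} {S : Finset V}
    (ha : a ∉ S) : edgeCountOn H (insert a S) = edgeCountOn H S + #(S.filter (H.Adj a)) := by
  have hsplit : H.edgeFinset.filter (· ∈ (insert a S).sym2)
      = (S.filter (H.Adj a)).map (Sym2.mkEmbedding a) ∪ H.edgeFinset.filter (· ∈ S.sym2) := by
    ext e
    induction e with
    | _ x y =>
      simp only [mem_union, mem_filter, mem_map, SimpleGraph.mem_edgeFinset,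
        SimpleGraph.mem_edgeSet, mk_mem_sym2_iff, mem_insert, Sym2.mkEmbedding_apply, Sym2.eq_iff]
      grind [SimpleGraph.Adj.symm, SimpleGraph.irrefl]
  have hdisj : Disjoint ((S.filter (H.Adj a)).map (Sym2.mkEmbedding a))
      (H.edgeFinset.filter (· ∈ S.sym2)) := by
    simp only [disjoint_left, mem_map, mem_filter, Sym2.mkEmbedding_apply]
    rintro _ ⟨x, -, rfl⟩ ⟨-, haS⟩
    exact ha (mk_mem_sym2_iff.1 haS).1
  rw [edgeCountOn, hsplit, card_union_of_disjoint hdisj, card_map, add_comm]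
  rfl

theorem edgeCountOn_insert_insert_add (H : SimpleGraph V) [DecidableRel H.Adj] {a b : V}
    {S : Finset V} (hab : a ≠ b) (ha : a ∉ S) (hb : b ∉ S) :
    edgeCountOn H (insert a (insert b S)) + edgeCountOn H S
      = edgeCountOn H (insert a S) + edgeCountOn H (insert b S) + if H.Adj a b then 1 else 0 := by
  have hab' : a ∉ insert b S := by simp [hab, ha]
  have hbS : b ∉ S.filter (H.Adj a) := fun h => hb (mem_filter.1 h).1
  rw [edgeCountOn_insert H hab', edgeCountOn_insert H hb, edgeCountOn_insert H ha, filter_insert]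
  split_ifs
  · rw [card_insert_of_notMem hbS]
    ring
  · ring

theorem eq_bot_of_even_edgeCountOn (H : SimpleGraph V) [DecidableRel H.Adj] {k : ℕ}
    (hkV : k + 2 ≤ Fintype.card V)
    (heven : ∀ K : Finset V, k ≤ #K → #K ≤ k + 2 → Even (edgeCountOn H K)) : H = ⊥ := by
  ext a b
  simp only [SimpleGraph.bot_adj, iff_false]
  intro hab
  have hroom : k ≤ #(univ \ {a, b}) := by
    rw [card_sdiff_of_subset (subset_univ _), card_pair hab.ne, card_univ]
    omega
  obtain ⟨S, hS, hSk⟩ := exists_subset_card_eq hroom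
  have ha : a ∉ S := fun h => by simpa using hS h
  have hb : b ∉ S := fun h => by simpa using hS h
  have hsum := edgeCountOn_insert_insert_add H hab.ne ha hb
  rw [if_pos hab] at hsum
  have hSa : #(insert a S) = k + 1 := by rw [card_insert_of_notMem ha, hSk]
  have hSb : #(insert b S) = k + 1 := by rw [card_insert_of_notMem hb, hSk]
  have hSab : #(insert a (insert b S)) = k + 2 := by
    rw [card_insert_of_notMem (by simp [hab.ne, ha]), hSb]
  obtain ⟨n, hn⟩ := heven S (by omega) (by omega)
  obtain ⟨na, hna⟩ := heven (insert a S) (by omega) (by omega)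
  obtain ⟨nb, hnb⟩ := heven (insert b S) (by omega) (by omega)
  obtain ⟨nab, hnab⟩ := heven (insert a (insert b S)) (by omega) (by omega)
  omega

end EdgeCount

theorem graphs_eq_of_edgeCount_parity_general {V : Type*} [Fintype V] [DecidableEq V]
    (G G' : SimpleGraph V) [DecidableRel G.Adj] [DecidableRel G'.Adj]
    (k : ℕ) (hkv : k + 2 ≤ Fintype.card V) (hk4 : k % 4 = 2)
    (h : ∀ K : Finset V, K.card = k → edgeCountOn G K % 2 = edgeCountOn G' K % 2) :
    G = G' := by
  classical
  have hk2 : 2 ≤ k := by omega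
  have heven : ∀ K : Finset V, #K = k → Even (edgeCountOn (G ∆ G') K) := fun K hK =>
    (even_edgeCountOn_symmDiff_iff G G' K).2 (h K hK)
  refine symmDiff_eq_bot.1 (eq_bot_of_even_edgeCountOn (G ∆ G') hkv fun L hkL hLk => ?_)
  exact even_edgeCountOn_of_odd_choose _ hk2 heven (Nat.odd_choose_sub_two hk4 hkL hLk)

/-- If `k ≡ 2 (mod 4)`, `2 ≤ k ≤ v - 2`, and the edge counts of `G` and `G'` have the
same parity on all `k`-sets, then `G = G'`. -/
theorem graphs_eq_of_edgeCount_parity {V : Type*} [Fintype V] [DecidableEq V]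
    (G G' : SimpleGraph V) [DecidableRel G.Adj] [DecidableRel G'.Adj]
    (k : ℕ) (hk2 : 2 ≤ k) (hkv : k + 2 ≤ Fintype.card V) (hk4 : k % 4 = 2)
    (h : ∀ K : Finset V, K.card = k → edgeCountOn G K % 2 = edgeCountOn G' K % 2) :
    G = G' :=
  graphs_eq_of_edgeCount_parity_general G G' k hkv hk4 h
end

section
/- Let k be an integer with 2 ≤ k ≤ v-2 and k ≡ 0 (mod 4). Let G and G' be graphs on the same finite vertex set V of size v such that for all k-element subsets K of V, e(G|_K) and e(G'|_K) have the same parity. Then G' = G or G' is the complement of G. -/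
open Finset
open scoped symmDiff

namespace Finset

variable {α M : Type*} [DecidableEq α] {s : Finset α} {n : ℕ}

theorem apply_eq_apply_of_sum_powersetCard_eq [AddCancelCommMonoid M] {g : α → M} {c : M}
    (hn₀ : 0 < n) (hns : n < #s) (h : ∀ t ∈ s.powersetCard n, ∑ i ∈ t, g i = c)
    {a b : α} (ha : a ∈ s) (hb : b ∈ s) : g a = g b := by
  rcases eq_or_ne a b with rfl | hab
  · rfl
  obtain ⟨t, hts, hcard⟩ := exists_subset_card_eq (s := (s.erase a).erase b) (n := n - 1)
    (by rw [card_erase_of_mem (mem_erase.2 ⟨hab.symm, hb⟩), card_erase_of_mem ha]; omega)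
  have hat : a ∉ t := fun hat => by simpa using hts hat
  have hbt : b ∉ t := fun hbt => by simpa using hts hbt
  have hsub : t ⊆ s := hts.trans ((erase_subset _ _).trans (erase_subset _ _))
  have hca := h (insert a t) (mem_powersetCard.2
    ⟨insert_subset ha hsub, by rw [card_insert_of_notMem hat]; omega⟩)
  have hcb := h (insert b t) (mem_powersetCard.2
    ⟨insert_subset hb hsub, by rw [card_insert_of_notMem hbt]; omega⟩)
  rw [sum_insert hat] at hca
  rw [sum_insert hbt] at hcb
  exact add_right_cancel (hca.trans hcb.symm)

theorem eq_zero_of_sum_powersetCard_eq_zero_s14 {g : α → ZMod 2} (hn : Odd n) (hns : n < #s)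
    (h : ∀ t ∈ s.powersetCard n, ∑ i ∈ t, g i = 0) {a : α} (ha : a ∈ s) : g a = 0 := by
  obtain ⟨t, hat, hts, hcard⟩ := exists_subsuperset_card_eq (singleton_subset_iff.2 ha)
    (by rw [card_singleton]; exact hn.pos) hns.le
  have hconst : ∀ i ∈ t, g i = g a := fun i hi =>
    apply_eq_apply_of_sum_powersetCard_eq hn.pos hns h (hts hi) ha
  calc g a = n • g a := by rw [nsmul_eq_mul, hn.natCast_zmod_two, one_mul]
    _ = ∑ i ∈ t, g i := by rw [sum_congr rfl hconst, sum_const, hcard]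
    _ = 0 := h t (mem_powersetCard.2 ⟨hts, hcard⟩)

end Finset

namespace SimpleGraph

variable {V : Type*}

theorem eq_bot_or_eq_top_of_adj_iff_adj (H : SimpleGraph V)
    (h : ∀ x y w, x ≠ w → y ≠ w → (H.Adj x w ↔ H.Adj y w)) : H = ⊥ ∨ H = ⊤ := by
  refine or_iff_not_imp_left.2 fun hH => ?_
  obtain ⟨a, b, hab⟩ := ne_bot_iff_exists_adj.1 hH
  have hb : ∀ u ≠ b, H.Adj u b := fun u hu => (h a u b hab.ne hu).1 hab
  ext u v
  refine ⟨Adj.ne, fun huv => ?_⟩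
  rcases eq_or_ne v b with rfl | hvb
  · exact hb u huv
  · exact (h b u v hvb.symm huv).1 (hb v hvb).symm

variable [Fintype V] [DecidableEq V]

theorem natCast_edgeCountOn {R : Type*} [AddCommMonoidWithOne R] (H : SimpleGraph V)
    [DecidableRel H.Adj] (K : Finset V) :
    (edgeCountOn H K : R) = ∑ e ∈ K.sym2, if e ∈ H.edgeSet then 1 else 0 := by
  rw [edgeCountOn, filter_mem_eq_inter, inter_comm, ← filter_mem_eq_inter, natCast_card_filter]
  simp only [mem_edgeFinset]

theorem natCast_edgeCountOn_insert {R : Type*} [AddCommMonoidWithOne R] (H : SimpleGraph V)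
    [DecidableRel H.Adj] {T : Finset V} {a : V} (ha : a ∉ T) :
    (edgeCountOn H (insert a T) : R) = edgeCountOn H T + ∑ b ∈ T, H.adjMatrix R a b := by
  rw [← cons_eq_insert _ _ ha, natCast_edgeCountOn, natCast_edgeCountOn, sym2_cons,
    sum_disjUnion, sum_map, sum_cons, add_comm]
  simp [adjMatrix_apply]

theorem natCast_edgeCountOn_symmDiff (G G' : SimpleGraph V) [DecidableRel G.Adj]
    [DecidableRel G'.Adj] [DecidableRel (G ∆ G').Adj] (K : Finset V) :
    (edgeCountOn (G ∆ G') K : ZMod 2) = edgeCountOn G K + edgeCountOn G' K := by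
  simp only [natCast_edgeCountOn, ← sum_add_distrib]
  refine sum_congr rfl fun e _ => ?_
  induction e using Sym2.ind with
  | _ x y =>
    simp only [mem_edgeSet, symmDiff_def, sup_adj, sdiff_adj]
    by_cases hG : G.Adj x y <;> by_cases hG' : G'.Adj x y <;>
      simp [hG, hG', CharTwo.add_self_eq_zero]

theorem adj_iff_adj_of_even_edgeCountOn (H : SimpleGraph V) [DecidableRel H.Adj] {k : ℕ}
    (hk : Even k) (hk2 : 2 ≤ k) (hkv : k + 2 ≤ Fintype.card V)
    (h : ∀ K : Finset V, #K = k → Even (edgeCountOn H K)) {x y w : V} (hxw : x ≠ w)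
    (hyw : y ≠ w) : H.Adj x w ↔ H.Adj y w := by
  rcases eq_or_ne x y with rfl | hxy
  · rfl
  set s := (univ.erase x).erase y
  have hs : #s = Fintype.card V - 2 := by
    rw [card_erase_of_mem (by simpa using hxy.symm), card_erase_of_mem (mem_univ x), card_univ]
    omega
  have hsum : ∀ t ∈ s.powersetCard (k - 1),
      ∑ i ∈ t, (H.adjMatrix (ZMod 2) x i - H.adjMatrix (ZMod 2) y i) = 0 := by
    intro t ht
    obtain ⟨hts, hcard⟩ := mem_powersetCard.1 ht
    have hxt : x ∉ t := fun hx => by simpa [s] using hts hx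
    have hyt : y ∉ t := fun hy => by simpa [s] using hts hy
    have hinsert : ∀ a ∉ t, (edgeCountOn H t : ZMod 2) + ∑ i ∈ t, H.adjMatrix (ZMod 2) a i = 0 :=
      fun a ha => by
        rw [← natCast_edgeCountOn_insert H ha, ZMod.natCast_eq_zero_iff_even]
        exact h _ (by rw [card_insert_of_notMem ha]; omega)
    rw [sum_sub_distrib]
    linear_combination hinsert x hxt - hinsert y hyt
  have hw := eq_zero_of_sum_powersetCard_eq_zero_s14 (Nat.Even.sub_odd (by omega) hk odd_one)
    (by omega) hsum (a := w) (by simp [s, hxw.symm, hyw.symm])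
  by_cases hx : H.Adj x w <;> by_cases hy : H.Adj y w <;> simp_all [adjMatrix_apply]

theorem eq_bot_or_eq_top_of_even_edgeCountOn (H : SimpleGraph V) [DecidableRel H.Adj] {k : ℕ}
    (hk : Even k) (hk2 : 2 ≤ k) (hkv : k + 2 ≤ Fintype.card V)
    (h : ∀ K : Finset V, #K = k → Even (edgeCountOn H K)) : H = ⊥ ∨ H = ⊤ :=
  H.eq_bot_or_eq_top_of_adj_iff_adj fun _ _ _ hxw hyw =>
    H.adj_iff_adj_of_even_edgeCountOn hk hk2 hkv h hxw hyw

end SimpleGraph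

/-- If `4 ∣ k`, `2 ≤ k ≤ v - 2`, and the edge counts of `G` and `G'` have the same
parity on all `k`-sets, then `G' = G` or `G'` is the complement of `G`. -/
theorem graphs_eq_or_compl_of_edgeCount_parity {V : Type*} [Fintype V] [DecidableEq V]
    (G G' : SimpleGraph V) [DecidableRel G.Adj] [DecidableRel G'.Adj]
    (k : ℕ) (hk2 : 2 ≤ k) (hkv : k + 2 ≤ Fintype.card V) (hk4 : k % 4 = 0)
    (h : ∀ K : Finset V, K.card = k → edgeCountOn G K % 2 = edgeCountOn G' K % 2) :
    G' = G ∨ G' = Gᶜ := by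
  classical
  have hsymmDiff : ∀ K : Finset V, #K = k → Even (edgeCountOn (G ∆ G') K) := fun K hK => by
    rw [← ZMod.natCast_eq_zero_iff_even, SimpleGraph.natCast_edgeCountOn_symmDiff,
      (ZMod.natCast_eq_natCast_iff' _ _ 2).2 (h K hK), CharTwo.add_self_eq_zero]
  rcases (G ∆ G').eq_bot_or_eq_top_of_even_edgeCountOn (Nat.even_iff.2 (by omega)) hk2 hkv
    hsymmDiff with hbot | htop
  · exact .inl (symmDiff_eq_bot.1 hbot).symm
  · exact .inr ((symmDiff_eq_top _ _).1 htop).compl_eq.symm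
end

section
/- Let p ≥ 5 be prime and k an integer with 3 ≤ k ≤ v - 3 and k not congruent to 1 or 2 mod p. Let G, G' be graphs on the same set V of v vertices with v ≥ 6. If for every k-element subset K of V, the number of 3-homogeneous subsets of G|_K is congruent mod p to that of G'|_K, then G and G' have the same 3-homogeneous subsets. -/
/-- A 3-element subset is homogeneous in `G` if it induces a complete or an empty graph. -/
def IsHomog3 {V : Type*} (G : SimpleGraph V) (S : Finset V) : Prop :=
  S.card = 3 ∧ ((∀ x ∈ S, ∀ y ∈ S, x ≠ y → G.Adj x y) ∨ (∀ x ∈ S, ∀ y ∈ S, ¬ G.Adj x y))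

/-- Number of 3-homogeneous subsets of the induced subgraph of `G` on `K`. -/
def homog3CountOn {V : Type*} [DecidableEq V] (G : SimpleGraph V) [DecidableRel G.Adj]
    (K : Finset V) : ℕ :=
  ((K.powersetCard 3).filter
    (fun S => (∀ x ∈ S, ∀ y ∈ S, x ≠ y → G.Adj x y) ∨ (∀ x ∈ S, ∀ y ∈ S, ¬ G.Adj x y))).card

/-!
Let `γ S ∈ ZMod p` be the difference of the indicators of `G`- and `G'`-homogeneity of `S`, and
`F M` the sum of `γ` over the triples of `M`; by hypothesis `F` vanishes on `k`-sets. Double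
counting gives `∑ u ∈ M, F (M \ {u}) = (#M - 3) • F M`, and as `k - 2` and `k - 1` are units mod
`p`, `F` also vanishes on `(k+1)`- and `(k+2)`-sets. For a `(k-1)`-set `A` disjoint from a triple
`T`, the alternating sum of `F` over the eight sets between `A` and `A ∪ T` is `γ T`, so
`γ T = -F A`. Taking `A` disjoint from two triples that differ in one point (possible as
`k + 3 ≤ |V|`) shows that `γ` is constant on triples. By `R(3,3) = 6` both graphs have a
homogeneous triple, which forces that constant into `{0, -1} ∩ {0, 1} = {0}` since `p ≠ 2`.
-/

open Finset

section Exchange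

variable {α β : Type*} [DecidableEq α]

/-- Connectedness of the Johnson graph on `r`-subsets. -/
theorem eq_of_card_eq_of_forall_card_union_le (φ : Finset α → β) {r : ℕ}
    (hφ : ∀ s t, #s = r → #t = r → #(s ∪ t) ≤ r + 1 → φ s = φ t)
    {s t : Finset α} (hs : #s = r) (ht : #t = r) : φ s = φ t := by
  induction h : #(t \ s) generalizing s with
  | zero =>
    have hts : t ⊆ s := sdiff_eq_empty_iff_subset.1 (card_eq_zero.1 h)
    rw [eq_of_subset_of_card_le hts (by omega)]
  | succ n ih =>
    obtain ⟨b, hb⟩ : (t \ s).Nonempty := card_pos.1 (by omega)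
    obtain ⟨a, ha⟩ : (s \ t).Nonempty :=
      card_pos.1 (by rw [card_sdiff_comm (hs.trans ht.symm)]; omega)
    rw [mem_sdiff] at ha hb
    have hb' : b ∉ s.erase a := fun hb' => hb.2 (mem_of_mem_erase hb')
    have hs' : #(insert b (s.erase a)) = r := by
      have := card_pos.2 ⟨a, ha.1⟩
      rw [card_insert_of_notMem hb', card_erase_of_mem ha.1]; omega
    have hunion : #(s ∪ insert b (s.erase a)) ≤ r + 1 := by
      calc #(s ∪ insert b (s.erase a)) ≤ #(insert b s) :=
            card_le_card (union_subset (subset_insert b s)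
              (insert_subset_insert b (erase_subset a s)))
        _ ≤ r + 1 := by rw [card_insert_of_notMem hb.2, hs]
    rw [hφ _ _ hs hs' hunion]
    refine ih hs' ?_
    have : t \ insert b (s.erase a) = (t \ s).erase b := by
      ext w
      simp only [mem_sdiff, mem_insert, mem_erase]
      grind
    rw [this, card_erase_of_mem (mem_sdiff.2 hb), h]; rfl

end Exchange

section PowersetCardSums

variable {α M : Type*} [DecidableEq α] [AddCommMonoid M]

theorem sum_powersetCard_succ_insert (f : Finset α → M) {x : α} {s : Finset α} (hx : x ∉ s)
    (n : ℕ) :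
    ∑ t ∈ (insert x s).powersetCard (n + 1), f t =
      ∑ t ∈ s.powersetCard (n + 1), f t + ∑ t ∈ s.powersetCard n, f (insert x t) := by
  have hnot : ∀ t ∈ s.powersetCard n, x ∉ t := fun t ht hxt => hx ((mem_powersetCard.1 ht).1 hxt)
  rw [powersetCard_succ_insert hx, sum_union, sum_image]
  · exact fun t ht u hu htu => by
      rw [← erase_insert (hnot t ht), ← erase_insert (hnot u hu)]; exact congrArg (erase · x) htu
  · rw [disjoint_left]
    intro _ ht' ht''
    obtain ⟨t, -, rfl⟩ := mem_image.1 ht''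
    exact hx ((mem_powersetCard.1 ht').1 (mem_insert_self x t))

theorem sum_sum_powersetCard_erase (f : Finset α → M) (s : Finset α) (r : ℕ) :
    ∑ a ∈ s, ∑ t ∈ (s.erase a).powersetCard r, f t = (#s - r) • ∑ t ∈ s.powersetCard r, f t := by
  calc ∑ a ∈ s, ∑ t ∈ (s.erase a).powersetCard r, f t
      = ∑ a ∈ s, ∑ t ∈ s.powersetCard r, if a ∉ t then f t else 0 := by
        refine sum_congr rfl fun a _ => ?_
        rw [← sum_filter]
        congr 1
        ext t
        simp only [mem_powersetCard, mem_filter, subset_erase]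
        tauto
    _ = ∑ t ∈ s.powersetCard r, (#s - r) • f t := by
        rw [sum_comm]
        refine sum_congr rfl fun t ht => ?_
        obtain ⟨hts, htr⟩ := mem_powersetCard.1 ht
        rw [← sum_filter, ← sdiff_eq_filter, sum_const, card_sdiff_of_subset hts, htr]
    _ = (#s - r) • ∑ t ∈ s.powersetCard r, f t := (smul_sum ..).symm

end PowersetCardSums

section TripleSum

variable {V R : Type*} [DecidableEq V]

def tripleSum [AddCommMonoid R] (γ : Finset V → R) (M : Finset V) : R :=
  ∑ S ∈ M.powersetCard 3, γ S

theorem tripleSum_eq_zero_of_card_eq_succ [Ring R] [NoZeroDivisors R] {γ : Finset V → R} {m : ℕ}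
    (hm : ((m - 2 : ℕ) : R) ≠ 0) (h : ∀ K : Finset V, #K = m → tripleSum γ K = 0) :
    ∀ M : Finset V, #M = m + 1 → tripleSum γ M = 0 := by
  intro M hM
  have hsum : ∑ u ∈ M, tripleSum γ (M.erase u) = 0 :=
    sum_eq_zero fun u hu => h _ (by rw [card_erase_of_mem hu, hM, Nat.add_sub_cancel])
  unfold tripleSum at hsum ⊢
  rw [sum_sum_powersetCard_erase, hM, show m + 1 - 3 = m - 2 by omega,
    nsmul_eq_mul] at hsum
  exact (mul_eq_zero.1 hsum).resolve_left hm

variable [AddCommGroup R] (γ : Finset V → R)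

theorem tripleSum_insert {x : V} {A : Finset V} (hx : x ∉ A) :
    tripleSum γ (insert x A) = tripleSum γ A + ∑ P ∈ A.powersetCard 2, γ (insert x P) :=
  sum_powersetCard_succ_insert γ hx 2

theorem sum_powersetCard_two_insert (x : V) {y : V} {A : Finset V} (hy : y ∉ A) :
    ∑ P ∈ (insert y A).powersetCard 2, γ (insert x P) =
      ∑ P ∈ A.powersetCard 2, γ (insert x P) + ∑ w ∈ A, γ {x, y, w} := by
  rw [sum_powersetCard_succ_insert (fun P => γ (insert x P)) hy 1, powersetCard_one, sum_map]
  rfl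

theorem eq_neg_tripleSum_of_disjoint {A T : Finset V} (hT : #T = 3) (hAT : Disjoint A T)
    (hvanish : ∀ K : Finset V, #A < #K → #K ≤ #A + 3 → tripleSum γ K = 0) :
    γ T = - tripleSum γ A := by
  obtain ⟨x, y, z, hxy, hxz, hyz, rfl⟩ := card_eq_three.1 hT
  simp only [disjoint_insert_right, disjoint_singleton_right] at hAT
  obtain ⟨hx, hy, hz⟩ := hAT
  have vanish1 : ∀ u ∉ A, tripleSum γ (insert u A) = 0 := fun u hu =>
    hvanish _ (by simp [card_insert_of_notMem hu]) (by simp [card_insert_of_notMem hu])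
  have vanish2 : ∀ u ∉ A, ∀ v ∉ A, u ≠ v → tripleSum γ (insert u (insert v A)) = 0 :=
    fun u hu v hv huv => by
      have : #(insert u (insert v A)) = #A + 2 := by
        rw [card_insert_of_notMem (by simp [huv, hu]), card_insert_of_notMem hv]
      exact hvanish _ (by omega) (by omega)
  have vanish3 : tripleSum γ (insert x (insert y (insert z A))) = 0 := by
    have : #(insert x (insert y (insert z A))) = #A + 3 := by
      rw [card_insert_of_notMem (by simp [hxy, hxz, hx]),
        card_insert_of_notMem (by simp [hyz, hy]), card_insert_of_notMem hz]
    exact hvanish _ (by omega) (by omega)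
  have pairs : ∀ u ∉ A, ∑ P ∈ A.powersetCard 2, γ (insert u P) = - tripleSum γ A :=
    fun u hu => by
      have := vanish1 u hu
      rw [tripleSum_insert γ hu] at this
      rw [← sub_eq_zero, ← this]; abel
  have singles : ∀ u ∉ A, ∀ v ∉ A, u ≠ v → ∑ w ∈ A, γ {u, v, w} = tripleSum γ A :=
    fun u hu v hv huv => by
      have := vanish2 u hu v hv huv
      rw [tripleSum_insert γ (by simp [huv, hu]), vanish1 v hv,
        sum_powersetCard_two_insert γ u hv, pairs u hu] at this
      rw [← sub_eq_zero, ← this]; abel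
  have := vanish3
  rw [tripleSum_insert γ (by simp [hxy, hxz, hx]), vanish2 y hy z hz hyz,
    sum_powersetCard_two_insert γ x (by simp [hyz, hy]), sum_powersetCard_two_insert γ x hz,
    sum_insert hz, pairs x hx, singles x hx z hz hxz, singles x hx y hy hxy] at this
  rw [← sub_eq_zero, ← this]; abel

theorem apply_eq_of_card_eq_three [Fintype V] {k : ℕ} (hk : 1 ≤ k) (hkV : k + 3 ≤ Fintype.card V)
    (hvanish : ∀ K : Finset V, k ≤ #K → #K ≤ k + 2 → tripleSum γ K = 0)
    {T T' : Finset V} (hT : #T = 3) (hT' : #T' = 3) : γ T = γ T' := by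
  refine eq_of_card_eq_of_forall_card_union_le γ (fun S S' hS hS' hSS' => ?_) hT hT'
  obtain ⟨A, hA, hAk⟩ := exists_subset_card_eq (s := (S ∪ S')ᶜ) (n := k - 1)
    (by rw [card_compl]; omega)
  have hvanishA : ∀ K : Finset V, #A < #K → #K ≤ #A + 3 → tripleSum γ K = 0 :=
    fun K h1 h2 => hvanish K (by omega) (by omega)
  have hdisj : Disjoint A (S ∪ S') := subset_compl_iff_disjoint_right.1 hA
  rw [eq_neg_tripleSum_of_disjoint γ hS (hdisj.mono_right subset_union_left) hvanishA,
    eq_neg_tripleSum_of_disjoint γ hS' (hdisj.mono_right subset_union_right) hvanishA]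

end TripleSum

section Ramsey

variable {V : Type*} {G : SimpleGraph V}

theorem isHomog3_compl_iff {S : Finset V} : IsHomog3 Gᶜ S ↔ IsHomog3 G S := by
  simp only [IsHomog3, SimpleGraph.compl_adj]
  refine and_congr_right fun _ => ⟨fun h => h.symm.imp ?_ ?_, fun h => h.symm.imp ?_ ?_⟩
  all_goals intro h x hx y hy
  · exact fun hxy => by_contra fun hadj => h x hx y hy ⟨hxy, hadj⟩
  · exact fun hadj => (h x hx y hy hadj.ne).2 hadj
  · exact fun hxy => ⟨hxy, h x hx y hy⟩
  · exact fun hadj => hadj.2 (h x hx y hy hadj.1)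

variable [DecidableEq V]

theorem isHomog3_triple {a b c : V} (hab : a ≠ b) (hac : a ≠ c) (hbc : b ≠ c)
    (h : (G.Adj a b ∧ G.Adj a c ∧ G.Adj b c) ∨ (¬G.Adj a b ∧ ¬G.Adj a c ∧ ¬G.Adj b c)) :
    IsHomog3 G {a, b, c} := by
  refine ⟨card_eq_three.2 ⟨a, b, c, hab, hac, hbc, rfl⟩, ?_⟩
  simp only [mem_insert, mem_singleton, forall_eq_or_imp, forall_eq]
  rcases h with h | h <;> [left; right] <;> simp_all [G.adj_comm]

theorem exists_isHomog3_of_adj {a : V} {N : Finset V} (hN : 3 ≤ #N) (hadj : ∀ u ∈ N, G.Adj a u) :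
    ∃ S, IsHomog3 G S := by
  obtain ⟨T, hTN, hT⟩ := exists_subset_card_eq hN
  obtain ⟨b, c, d, hbc, hbd, hcd, rfl⟩ := card_eq_three.1 hT
  have hb := hadj b (hTN (by simp))
  have hc := hadj c (hTN (by simp))
  have hd := hadj d (hTN (by simp))
  by_cases h₁ : G.Adj b c
  · exact ⟨_, isHomog3_triple hb.ne hc.ne hbc (Or.inl ⟨hb, hc, h₁⟩)⟩
  by_cases h₂ : G.Adj b d
  · exact ⟨_, isHomog3_triple hb.ne hd.ne hbd (Or.inl ⟨hb, hd, h₂⟩)⟩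
  by_cases h₃ : G.Adj c d
  · exact ⟨_, isHomog3_triple hc.ne hd.ne hcd (Or.inl ⟨hc, hd, h₃⟩)⟩
  exact ⟨_, isHomog3_triple hbc hbd hcd (Or.inr ⟨h₁, h₂, h₃⟩)⟩

theorem exists_isHomog3 [Fintype V] (G : SimpleGraph V) (hV : 6 ≤ Fintype.card V) :
    ∃ S, IsHomog3 G S := by
  classical
  obtain ⟨a⟩ : Nonempty V := Fintype.card_pos_iff.1 (by omega)
  have hdeg := G.degree_compl (v := a)
  by_cases ha : 3 ≤ G.degree a
  · exact exists_isHomog3_of_adj ha fun u hu => (G.mem_neighborFinset a u).1 hu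
  · have hac : 3 ≤ #(Gᶜ.neighborFinset a) := by
      rw [SimpleGraph.card_neighborFinset_eq_degree]; omega
    obtain ⟨S, hS⟩ := exists_isHomog3_of_adj hac fun u hu => (Gᶜ.mem_neighborFinset a u).1 hu
    exact ⟨S, isHomog3_compl_iff.1 hS⟩

end Ramsey

section Indicator

variable {V : Type*} (R : Type*)

noncomputable def homog3Indicator [Zero R] [One R] (G : SimpleGraph V) : Finset V → R :=
  {S | IsHomog3 G S}.indicator 1

variable {R}

section

variable [Zero R] [One R] {G : SimpleGraph V} {S : Finset V}

theorem homog3Indicator_of_isHomog3 (h : IsHomog3 G S) : homog3Indicator R G S = 1 :=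
  Set.indicator_of_mem (s := {S | IsHomog3 G S}) h 1

theorem homog3Indicator_of_not_isHomog3 (h : ¬IsHomog3 G S) : homog3Indicator R G S = 0 :=
  Set.indicator_of_notMem (s := {S | IsHomog3 G S}) h 1

end

theorem natCast_homog3CountOn [DecidableEq V] [AddCommMonoidWithOne R] (G : SimpleGraph V)
    [DecidableRel G.Adj] (K : Finset V) :
    (homog3CountOn G K : R) = ∑ S ∈ K.powersetCard 3, homog3Indicator R G S := by
  rw [homog3CountOn, natCast_card_filter]
  refine sum_congr rfl fun S hS => ?_
  have hS3 := (mem_powersetCard.1 hS).2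
  by_cases hG : IsHomog3 G S
  · rw [if_pos hG.2, homog3Indicator_of_isHomog3 hG]
  · rw [if_neg (fun h => hG ⟨hS3, h⟩), homog3Indicator_of_not_isHomog3 hG]

theorem tripleSum_homog3Indicator_sub [DecidableEq V] [AddCommGroupWithOne R]
    (G G' : SimpleGraph V) [DecidableRel G.Adj] [DecidableRel G'.Adj] (K : Finset V) :
    tripleSum (fun S => homog3Indicator R G S - homog3Indicator R G' S) K =
      homog3CountOn G K - homog3CountOn G' K := by
  rw [tripleSum, sum_sub_distrib, natCast_homog3CountOn, natCast_homog3CountOn]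

theorem isHomog3_of_homog3Indicator_sub_eq [Ring R] (h2 : (2 : R) ≠ 0)
    {G G' : SimpleGraph V} {S T : Finset V} (hS : IsHomog3 G S) (hT : IsHomog3 G' T)
    (hST : homog3Indicator R G S - homog3Indicator R G' S =
      homog3Indicator R G T - homog3Indicator R G' T) :
    IsHomog3 G' S := by
  by_contra hS'
  have h1 : (1 : R) ≠ 0 := fun h => h2 (by rw [← one_add_one_eq_two, h, add_zero])
  rw [homog3Indicator_of_isHomog3 hS, homog3Indicator_of_not_isHomog3 hS',
    homog3Indicator_of_isHomog3 hT, sub_zero] at hST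
  by_cases hGT : IsHomog3 G T
  · rw [homog3Indicator_of_isHomog3 hGT, sub_self] at hST
    exact h1 hST
  · rw [homog3Indicator_of_not_isHomog3 hGT, zero_sub] at hST
    exact h2 (by rw [← one_add_one_eq_two]; nth_rw 1 [hST]; exact neg_add_cancel 1)

end Indicator

theorem natCast_sub_ne_zero_of_mod_ne {p k r : ℕ} (hrp : r < p) (hrk : r ≤ k) (h : k % p ≠ r) :
    ((k - r : ℕ) : ZMod p) ≠ 0 := by
  rw [Ne, ZMod.natCast_eq_zero_iff, ← Nat.modEq_iff_dvd' hrk, Nat.ModEq, Nat.mod_eq_of_lt hrp]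
  exact h ∘ Eq.symm

theorem same_homog3_of_counts_mod_p_general {V : Type*} [Fintype V] [DecidableEq V]
    (G G' : SimpleGraph V) [DecidableRel G.Adj] [DecidableRel G'.Adj]
    (p k : ℕ) (hp : p.Prime) (hp5 : 5 ≤ p)
    (hk3 : 3 ≤ k) (hkv : k + 3 ≤ Fintype.card V)
    (h1 : k % p ≠ 1) (h2 : k % p ≠ 2)
    (h : ∀ K : Finset V, K.card = k → homog3CountOn G K ≡ homog3CountOn G' K [MOD p]) :
    ∀ S : Finset V, IsHomog3 G S ↔ IsHomog3 G' S := by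
  have : Fact p.Prime := ⟨hp⟩
  set γ : Finset V → ZMod p := fun S => homog3Indicator _ G S - homog3Indicator _ G' S
  have hk : ∀ K : Finset V, #K = k → tripleSum γ K = 0 := fun K hK => by
    rw [tripleSum_homog3Indicator_sub, (ZMod.natCast_eq_natCast_iff _ _ _).2 (h K hK), sub_self]
  have hk1 := tripleSum_eq_zero_of_card_eq_succ
    (natCast_sub_ne_zero_of_mod_ne (by omega) (by omega) h2) hk
  have hk2 := tripleSum_eq_zero_of_card_eq_succ
    (by rw [show k + 1 - 2 = k - 1 by omega]
        exact natCast_sub_ne_zero_of_mod_ne (by omega) (by omega) h1) hk1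
  have hconst : ∀ T T' : Finset V, #T = 3 → #T' = 3 → γ T = γ T' :=
    fun T T' => apply_eq_of_card_eq_three γ (by omega) hkv fun K hK hK' => by
      obtain hK | hK | hK : #K = k ∨ #K = k + 1 ∨ #K = k + 2 := by omega
      exacts [hk K hK, hk1 K hK, hk2 K hK]
  have htwo : (2 : ZMod p) ≠ 0 := fun h2p =>
    absurd (Nat.le_of_dvd two_pos ((ZMod.natCast_eq_zero_iff 2 p).1 (by exact_mod_cast h2p)))
      (by omega)
  intro S
  constructor
  · intro hS
    obtain ⟨T, hT⟩ := exists_isHomog3 G' (by omega)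
    exact isHomog3_of_homog3Indicator_sub_eq htwo hS hT (hconst S T hS.1 hT.1)
  · intro hS
    obtain ⟨T, hT⟩ := exists_isHomog3 G (by omega)
    refine isHomog3_of_homog3Indicator_sub_eq htwo hS hT ?_
    rw [← neg_sub, ← neg_sub (homog3Indicator _ G T)]
    exact congrArg Neg.neg (hconst S T hS.1 hT.1)

/-- For `p ≥ 5` prime, `3 ≤ k ≤ v - 3`, `k ≢ 1, 2 (mod p)`, `v ≥ 6`: if the numbers of
3-homogeneous subsets of `G` and `G'` agree mod `p` on every `k`-set, then `G` and `G'`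
have the same 3-homogeneous subsets. -/
theorem same_homog3_of_counts_mod_p {V : Type*} [Fintype V] [DecidableEq V]
    (G G' : SimpleGraph V) [DecidableRel G.Adj] [DecidableRel G'.Adj]
    (p k : ℕ) (hp : p.Prime) (hp5 : 5 ≤ p)
    (hk3 : 3 ≤ k) (hkv : k + 3 ≤ Fintype.card V) (hv6 : 6 ≤ Fintype.card V)
    (h1 : k % p ≠ 1) (h2 : k % p ≠ 2)
    (h : ∀ K : Finset V, K.card = k → homog3CountOn G K ≡ homog3CountOn G' K [MOD p]) :
    ∀ S : Finset V, IsHomog3 G S ↔ IsHomog3 G' S :=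
  same_homog3_of_counts_mod_p_general G G' p k hp hp5 hk3 hkv h1 h2 h
end

section
/- Let p ≥ 3 be prime, let k be an integer with 2 ≤ k ≤ v-2 and p | k, and let T, T' be tournaments on the same vertex set V of size v. Let G be the boolean sum T +̇ T', the graph whose edges are the pairs {x,y} such that the arc direction between x and y in T differs from that in T'. If for every k-element subset K of V, the number of edges of G|_K is divisible by p, then T' = T or T' = T* (the dual tournament obtained by reversing all arcs). -/
/-- A tournament on `V`: an orientation of the complete graph. -/
structure Tournament (V : Type*) where
  arc : V → V → Bool
  irrefl : ∀ x, arc x x = false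
  total : ∀ x y, x ≠ y → arc x y = !arc y x

/-- The dual tournament, with all arcs reversed. -/
def Tournament.dual {V : Type*} (T : Tournament V) : Tournament V :=
  ⟨fun x y => T.arc y x, T.irrefl, fun x y h => T.total y x (Ne.symm h)⟩

/-- The boolean sum of two tournaments: the graph whose edges are the pairs on which
the two tournaments disagree. -/
def boolSum {V : Type*} (T T' : Tournament V) : SimpleGraph V where
  Adj x y := x ≠ y ∧ T.arc x y ≠ T'.arc x y
  symm := ⟨by
    intro x y ⟨hne, hd⟩
    refine ⟨hne.symm, ?_⟩
    rw [T.total y x (Ne.symm hne), T'.total y x (Ne.symm hne)]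
    simpa using hd⟩
  loopless := ⟨fun x h => h.1 rfl⟩

instance {V : Type*} [DecidableEq V] (T T' : Tournament V) :
    DecidableRel (boolSum T T').Adj :=
  fun x y => inferInstanceAs (Decidable (x ≠ y ∧ T.arc x y ≠ T'.arc x y))

/-!
Adding a vertex `u ∉ K` to a set `K` adds one edge for each neighbour of `u` in `K`, so when
`#K = k - 1` all vertices outside `K` have the same number of neighbours in `K` modulo `p`.
Comparing `L ∪ {z}` with `L ∪ {w}` for a `(k - 2)`-set `L` gives
`[x ~ z] + [y ~ w] ≡ [x ~ w] + [y ~ z] (mod p)`, an equality as `p ≥ 3`. So if `x ~ z` but not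
`y ~ z`, then `x` is adjacent and `y` non-adjacent to every other vertex, and a `(k - 1)`-set
avoiding both gives `k - 1 ≡ 0 (mod p)`, against `p ∣ k`. Adjacency to `z` is thus independent
of the other endpoint, which forces `T +̇ T'` to be empty (`T' = T`) or complete (`T' = T*`).
-/

open Finset

section
variable {V : Type*} [DecidableEq V] (G : SimpleGraph V) [DecidableRel G.Adj]

lemma card_filter_adj_insert (x : V) {w : V} {L : Finset V} (hw : w ∉ L) :
    #{z ∈ insert w L | G.Adj x z} = #{z ∈ L | G.Adj x z} + G.adjMatrix ℕ x w := by
  rw [filter_insert, SimpleGraph.adjMatrix_apply]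
  split_ifs
  · exact card_insert_of_notMem fun hw' => hw (mem_filter.1 hw').1
  · rfl

lemma edgeCountOn_insert_s18 [Fintype V] {x : V} {K : Finset V} (hx : x ∉ K) :
    edgeCountOn G (insert x K) = edgeCountOn G K + #{z ∈ K | G.Adj x z} := by
  have hsplit : G.edgeFinset.filter (· ∈ (insert x K).sym2) =
      G.edgeFinset.filter (· ∈ K.sym2) ∪ {z ∈ K | G.Adj x z}.map (Sym2.mkEmbedding x) := by
    ext e
    induction e using Sym2.ind with
    | _ a b =>
      simp only [mem_filter, SimpleGraph.mem_edgeFinset, SimpleGraph.mem_edgeSet,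
        mk_mem_sym2_iff, mem_insert, mem_union, mem_map, Sym2.mkEmbedding_apply, Sym2.eq_iff]
      constructor
      · rintro ⟨hab, rfl | ha, rfl | hb⟩
        · exact absurd hab (G.loopless.irrefl _)
        · exact Or.inr ⟨b, ⟨hb, hab⟩, Or.inl ⟨rfl, rfl⟩⟩
        · exact Or.inr ⟨a, ⟨ha, hab.symm⟩, Or.inr ⟨rfl, rfl⟩⟩
        · exact Or.inl ⟨hab, ha, hb⟩
      · rintro (⟨hab, ha, hb⟩ | ⟨z, ⟨hz, hxz⟩, ⟨rfl, rfl⟩ | ⟨rfl, rfl⟩⟩)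
        · exact ⟨hab, Or.inr ha, Or.inr hb⟩
        · exact ⟨hxz, Or.inl rfl, Or.inr hz⟩
        · exact ⟨hxz.symm, Or.inr hz, Or.inl rfl⟩
  have hdisj : Disjoint (G.edgeFinset.filter (· ∈ K.sym2))
      ({z ∈ K | G.Adj x z}.map (Sym2.mkEmbedding x)) := by
    simp only [disjoint_left, mem_filter, mem_map, not_exists, not_and]
    rintro _ ⟨_, he⟩ z _ rfl
    exact hx (mk_mem_sym2_iff.1 he).1
  rw [edgeCountOn, edgeCountOn, hsplit, card_union_of_disjoint hdisj, card_map]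
end

lemma Finset.exists_disjoint_card_eq {α : Type*} [Fintype α] [DecidableEq α] {s : Finset α}
    {n : ℕ} (h : n + #s ≤ Fintype.card α) : ∃ K : Finset α, Disjoint K s ∧ #K = n := by
  obtain ⟨K, hK, hKc⟩ := exists_subset_card_eq (s := sᶜ) (n := n) (by rw [card_compl]; omega)
  exact ⟨K, disjoint_of_subset_left hK disjoint_compl_left, hKc⟩

lemma SimpleGraph.eq_bot_or_eq_top_of_adj_iff_adj_s18 {V : Type*} {G : SimpleGraph V}
    (H : ∀ x y z, x ≠ y → x ≠ z → y ≠ z → (G.Adj x z ↔ G.Adj y z)) : G = ⊥ ∨ G = ⊤ := by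
  have hshared : ∀ x y w, x ≠ y → x ≠ w → (G.Adj x y ↔ G.Adj x w) := by
    intro x y w hxy hxw
    by_cases hyw : y = w
    · rw [hyw]
    · rw [G.adj_comm x y, G.adj_comm x w]
      exact H y w x hyw hxy.symm hxw.symm
  have hall : ∀ a b x y, a ≠ b → x ≠ y → (G.Adj a b ↔ G.Adj x y) := by
    intro a b x y hab hxy
    by_cases hay : a = y
    · subst hay
      rw [G.adj_comm x a]
      exact hshared a b x hab hxy.symm
    · rw [hshared a b y hab hay, G.adj_comm a y, hshared y a x (Ne.symm hay) hxy.symm,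
        G.adj_comm]
  by_cases hE : ∃ a b, G.Adj a b
  · obtain ⟨a, b, hab⟩ := hE
    right
    ext x y
    exact ⟨G.ne_of_adj, fun hxy => (hall a b x y (G.ne_of_adj hab) hxy).1 hab⟩
  · left
    ext x y
    exact iff_of_false (fun hxy => hE ⟨x, y, hxy⟩) id

section DivisibleEdgeCounts

variable {V : Type*} [Fintype V] [DecidableEq V] {G : SimpleGraph V} [DecidableRel G.Adj]
  {p k : ℕ}

lemma card_filter_adj_modEq_of_dvd_edgeCountOn
    (h : ∀ K : Finset V, #K = k → p ∣ edgeCountOn G K)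
    {x y : V} {K : Finset V} (hK : #K + 1 = k) (hx : x ∉ K) (hy : y ∉ K) :
    #{z ∈ K | G.Adj x z} ≡ #{z ∈ K | G.Adj y z} [MOD p] := by
  have hins : ∀ u ∉ K, edgeCountOn G K + #{z ∈ K | G.Adj u z} ≡ 0 [MOD p] := fun u hu => by
    rw [← edgeCountOn_insert_s18 G hu]
    exact Nat.modEq_zero_iff_dvd.2 (h _ (by rw [card_insert_of_notMem hu, hK]))
  exact Nat.ModEq.add_left_cancel' _ ((hins x hx).trans (hins y hy).symm)

lemma adjMatrix_add_adjMatrix_eq_of_dvd_edgeCountOn (hp : 3 ≤ p) (hk : 2 ≤ k)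
    (hkV : k + 2 ≤ Fintype.card V) (h : ∀ K : Finset V, #K = k → p ∣ edgeCountOn G K)
    {x y z w : V} (hxz : x ≠ z) (hxw : x ≠ w) (hyz : y ≠ z) (hyw : y ≠ w) :
    G.adjMatrix ℕ x z + G.adjMatrix ℕ y w = G.adjMatrix ℕ x w + G.adjMatrix ℕ y z := by
  obtain ⟨L, hL, hLc⟩ := exists_disjoint_card_eq (s := {x, y, z, w}) (n := k - 2)
    (by have := card_le_four (a := x) (b := y) (c := z) (d := w); omega)
  simp only [disjoint_right, mem_insert, mem_singleton, forall_eq_or_imp, forall_eq] at hL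
  obtain ⟨hxL, hyL, hzL, hwL⟩ := hL
  have hcard : ∀ u ∉ L, #(insert u L) + 1 = k := fun u hu => by
    rw [card_insert_of_notMem hu]; omega
  have hviaz := card_filter_adj_modEq_of_dvd_edgeCountOn (x := x) (y := y) h (hcard z hzL)
    (by simp [hxz, hxL]) (by simp [hyz, hyL])
  have hviaw := card_filter_adj_modEq_of_dvd_edgeCountOn (x := x) (y := y) h (hcard w hwL)
    (by simp [hxw, hxL]) (by simp [hyw, hyL])
  rw [card_filter_adj_insert G x hzL, card_filter_adj_insert G y hzL] at hviaz
  rw [card_filter_adj_insert G x hwL, card_filter_adj_insert G y hwL] at hviaw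
  have hmod : G.adjMatrix ℕ x z + G.adjMatrix ℕ y w ≡ G.adjMatrix ℕ x w + G.adjMatrix ℕ y z
      [MOD p] := by
    refine Nat.ModEq.add_left_cancel' (#{u ∈ L | G.Adj x u} + #{u ∈ L | G.Adj y u}) ?_
    convert hviaz.add hviaw.symm using 1 <;> ring
  have hle : ∀ a b, G.adjMatrix ℕ a b ≤ 1 := fun a b => by
    rw [SimpleGraph.adjMatrix_apply]; split_ifs <;> simp
  exact hmod.eq_of_lt_of_lt (by grind) (by grind)

lemma adj_of_adj_of_dvd_edgeCountOn (hp : 3 ≤ p) (hk : 2 ≤ k)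
    (hkV : k + 2 ≤ Fintype.card V) (hpk : p ∣ k)
    (h : ∀ K : Finset V, #K = k → p ∣ edgeCountOn G K)
    {x y z : V} (hxz : x ≠ z) (hyz : y ≠ z) (hadj : G.Adj x z) : G.Adj y z := by
  by_contra hnadj
  have hsep : ∀ w, x ≠ w → y ≠ w → G.Adj x w ∧ ¬G.Adj y w := by
    intro w hxw hyw
    have := adjMatrix_add_adjMatrix_eq_of_dvd_edgeCountOn hp hk hkV h hxz hxw hyz hyw
    simp only [SimpleGraph.adjMatrix_apply, hadj, hnadj, if_true, if_false] at this
    split_ifs at this <;> simp_all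
  obtain ⟨K, hK, hKc⟩ := exists_disjoint_card_eq (s := {x, y}) (n := k - 1)
    (by have := card_le_two (a := x) (b := y); omega)
  simp only [disjoint_right, mem_insert, mem_singleton, forall_eq_or_imp, forall_eq] at hK
  have hsepK : ∀ w ∈ K, G.Adj x w ∧ ¬G.Adj y w := fun w hw =>
    hsep w (fun e => hK.1 (e ▸ hw)) (fun e => hK.2 (e ▸ hw))
  have hmod := card_filter_adj_modEq_of_dvd_edgeCountOn h (by omega : #K + 1 = k) hK.1 hK.2
  rw [filter_true_of_mem fun w hw => (hsepK w hw).1,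
    filter_false_of_mem fun w hw => (hsepK w hw).2, hKc, card_empty] at hmod
  have hp1 : p ∣ k - (k - 1) := Nat.dvd_sub hpk (Nat.modEq_zero_iff_dvd.1 hmod)
  rw [show k - (k - 1) = 1 by omega, Nat.dvd_one] at hp1
  omega

lemma eq_bot_or_eq_top_of_dvd_edgeCountOn (hp : 3 ≤ p) (hk : 2 ≤ k)
    (hkV : k + 2 ≤ Fintype.card V) (hpk : p ∣ k)
    (h : ∀ K : Finset V, #K = k → p ∣ edgeCountOn G K) : G = ⊥ ∨ G = ⊤ :=
  SimpleGraph.eq_bot_or_eq_top_of_adj_iff_adj_s18 fun _ _ _ _ hxz hyz =>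
    ⟨adj_of_adj_of_dvd_edgeCountOn hp hk hkV hpk h hxz hyz,
      adj_of_adj_of_dvd_edgeCountOn hp hk hkV hpk h hyz hxz⟩

end DivisibleEdgeCounts

theorem Tournament.ext {V : Type*} {T T' : Tournament V} (h : ∀ x y, T.arc x y = T'.arc x y) :
    T = T' := by
  cases T; cases T'; congr; funext x y; exact h x y

section BoolSum

variable {V : Type*} {T T' : Tournament V}

lemma eq_of_boolSum_eq_bot (h : boolSum T T' = ⊥) : T' = T := by
  refine Tournament.ext fun x y => ?_
  by_cases hxy : x = y
  · rw [hxy, T.irrefl, T'.irrefl]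
  · have hnadj : ¬(boolSum T T').Adj x y := h ▸ id
    by_contra hne
    exact hnadj ⟨hxy, Ne.symm hne⟩

lemma eq_dual_of_boolSum_eq_top (h : boolSum T T' = ⊤) : T' = T.dual := by
  refine Tournament.ext fun x y => ?_
  by_cases hxy : x = y
  · rw [hxy, T'.irrefl]; exact (T.irrefl y).symm
  · have hadj : (boolSum T T').Adj x y := h ▸ hxy
    show T'.arc x y = T.arc y x
    rw [T.total y x (Ne.symm hxy), Bool.eq_not_iff]
    exact hadj.2.symm

end BoolSum

theorem tournament_eq_or_dual_of_boolSum_mod_p_general {V : Type*} [Fintype V] [DecidableEq V]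
    (T T' : Tournament V) (p k : ℕ) (hp3 : 3 ≤ p)
    (hk2 : 2 ≤ k) (hkv : k + 2 ≤ Fintype.card V) (hpk : p ∣ k)
    (h : ∀ K : Finset V, K.card = k → p ∣ edgeCountOn (boolSum T T') K) :
    T' = T ∨ T' = T.dual :=
  (eq_bot_or_eq_top_of_dvd_edgeCountOn hp3 hk2 hkv hpk h).imp eq_of_boolSum_eq_bot
    eq_dual_of_boolSum_eq_top

/-- If `p ≥ 3` is prime, `p ∣ k`, `2 ≤ k ≤ v - 2`, and on every `k`-set the number of
edges of the boolean sum `T +̇ T'` is divisible by `p`, then `T' = T` or `T' = T*`. -/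
theorem tournament_eq_or_dual_of_boolSum_mod_p {V : Type*} [Fintype V] [DecidableEq V]
    (T T' : Tournament V) (p k : ℕ) (hp : p.Prime) (hp3 : 3 ≤ p)
    (hk2 : 2 ≤ k) (hkv : k + 2 ≤ Fintype.card V) (hpk : p ∣ k)
    (h : ∀ K : Finset V, K.card = k → p ∣ edgeCountOn (boolSum T T') K) :
    T' = T ∨ T' = T.dual :=
  tournament_eq_or_dual_of_boolSum_mod_p_general T T' p k hp3 hk2 hkv hpk h
end
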